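/- arXiv:1812.08503 — 8 statements merged into one kernel-verified Lean document; each statement's English description precedes it below -/
import Mathlib

section
/- If f is in the class U (analytic on the unit disk, f(0)=0, f'(0)=1, and |(z/f(z))^2 f'(z) - 1| < 1 for all z in the unit disk), then there exists a function ω analytic on the unit disk with ω(0)=ω'(0)=0 and |ω(z)|<1 for all z, such that z/f(z) = 1 - a₂ z - z ∫₀^z ω(t)/t² dt, where a₂ = f''(0)/2. -/
open Complex Metric

/-!
Write `p = z / f`, extended across the origin as `(dslope f 0)⁻¹`, so that `p 0 = 1` and
`p' 0 = -a₂`. Then `ω := p - 1 - z p'` equals `(z / f)² f' - 1` off the origin, and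
`-ω(w) / w²` is the derivative of the difference quotient `(p w - 1) / w`; integrating it
along the radius `[0, z]` gives back `p z`.
-/

section

variable {𝕜 : Type*} [NontriviallyNormedField 𝕜]

theorem AnalyticAt.iteratedDeriv_two_eq_two_mul_deriv_dslope [CompleteSpace 𝕜] {f : 𝕜 → 𝕜} {a : 𝕜}
    (hf : AnalyticAt 𝕜 f a) : iteratedDeriv 2 f a = 2 * deriv (dslope f a) a := by
  obtain ⟨p, hp⟩ := hf
  have hcoeff : deriv (dslope f a) a = p.coeff 2 := by
    rw [hp.has_fpower_series_dslope_fslope.deriv, ← p.coeff_fslope (n := 1)]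
    rfl
  obtain ⟨r, hball⟩ := hp
  rw [hcoeff, iteratedDeriv_eq_iteratedFDeriv, ← hball.factorial_smul (1 : 𝕜) 2,
    show (p 2 fun _ => (1 : 𝕜)) = p.coeff 2 from rfl, nsmul_eq_mul]
  norm_num [Nat.factorial]

theorem deriv_dslope_of_ne {g : 𝕜 → 𝕜} {a w : 𝕜} (hg : DifferentiableAt 𝕜 g w) (hw : w ≠ a) :
    deriv (dslope g a) w = -(g w - g a - (w - a) * deriv g w) / (w - a) ^ 2 := by
  have hslope : HasDerivAt (fun x => (g x - g a) / (x - a))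
      ((deriv g w * (w - a) - (g w - g a) * 1) / (w - a) ^ 2) w :=
    (hg.hasDerivAt.sub_const (g a)).div ((hasDerivAt_id w).sub_const a) (sub_ne_zero.2 hw)
  have hdslope : dslope g a =ᶠ[nhds w] fun x => (g x - g a) / (x - a) := by
    filter_upwards [dslope_eventuallyEq_slope_of_ne g hw] with x hx
    rw [hx, slope_def_field]
  rw [hdslope.deriv_eq, hslope.deriv]
  ring

theorem hasDerivAt_sub_sub_mul_deriv {g : 𝕜 → 𝕜} {w : 𝕜} (c : 𝕜) (hg : DifferentiableAt 𝕜 g w)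
    (hg' : DifferentiableAt 𝕜 (deriv g) w) :
    HasDerivAt (fun z => g z - c - z * deriv g z) (-(w * deriv (deriv g) w)) w :=
  ((hg.hasDerivAt.sub_const c).sub ((hasDerivAt_id' w).mul hg'.hasDerivAt)).congr_deriv
    (by ring)

theorem sub_one_sub_mul_deriv_of_eventuallyEq_div {f g : 𝕜 → 𝕜} {z : 𝕜}
    (hf : DifferentiableAt 𝕜 f z) (hfz : f z ≠ 0) (hg : g =ᶠ[nhds z] fun w => w / f w) :
    g z - 1 - z * deriv g z = (z / f z) ^ 2 * deriv f z - 1 := by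
  have hdiv : HasDerivAt (fun w => w / f w) ((1 * f z - z * deriv f z) / f z ^ 2) z :=
    (hasDerivAt_id' z).div hf.hasDerivAt hfz
  rw [hg.deriv_eq, hg.eq_of_nhds, hdiv.deriv]
  field_simp
  ring

end

theorem StarConvex.eq_add_deriv_mul_sub_integral {g : ℂ → ℂ} {s : Set ℂ}
    (hs₀ : StarConvex ℝ 0 s) (hs : IsOpen s) (hg : DifferentiableOn ℂ g s) {z : ℂ} (hz : z ∈ s) :
    g z = g 0 + deriv g 0 * z
      - z * ∫ t in (0:ℝ)..1, (g (t • z) - g 0 - t • z * deriv g (t • z)) / (t • z) ^ 2 * z := by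
  rcases eq_or_ne z 0 with rfl | hz₀
  · simp
  have hseg : ∀ t ∈ Set.Icc (0:ℝ) 1, 0 + t • z ∈ s := fun t ht => by
    simpa using hs₀.smul_mem hz ht.1 ht.2
  have hh : DifferentiableOn ℂ (dslope g 0) s :=
    (Complex.differentiableOn_dslope (hs.mem_nhds (by simpa using hseg 0 (by simp)))).2 hg
  have hftc := intervalIntegral.integral_unitInterval_deriv_eq_sub (f := dslope g 0)
    (z₀ := 0) (z₁ := z) ((hh.deriv hs).continuousOn.comp (by fun_prop) hseg)
    (fun t ht => ((hh _ (hseg t ht)).differentiableAt (hs.mem_nhds (hseg t ht))).hasDerivAt)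
  have hintegrand : ∀ t ∈ Set.uIoc (0:ℝ) 1,
      (g (t • z) - g 0 - t • z * deriv g (t • z)) / (t • z) ^ 2
        = -deriv (dslope g 0) (0 + t • z) := by
    intro t ht
    rw [Set.uIoc_of_le zero_le_one] at ht
    have htz : t • z ≠ 0 := smul_ne_zero ht.1.ne' hz₀
    have hmem : t • z ∈ s := by simpa using hseg t (Set.Ioc_subset_Icc_self ht)
    rw [zero_add, deriv_dslope_of_ne ((hg _ hmem).differentiableAt (hs.mem_nhds hmem)) htz]
    ring
  rw [intervalIntegral.integral_mul_const, intervalIntegral.integral_congr_ae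
    (MeasureTheory.ae_of_all _ hintegrand), intervalIntegral.integral_neg]
  simp only [zero_add, smul_eq_mul, dslope_same, dslope_of_ne _ hz₀, slope_def_field] at hftc
  rw [sub_zero, eq_sub_iff_add_eq, eq_div_iff hz₀] at hftc
  simp only [zero_add]
  linear_combination -hftc

theorem exists_differentiableOn_eq_div_of_deriv_eq_one {f : ℂ → ℂ} {s : Set ℂ} (hs : s ∈ nhds 0)
    (hf : DifferentiableOn ℂ f s) (hf0 : f 0 = 0) (hf1 : deriv f 0 = 1)
    (hf_ne : ∀ z ∈ s, z ≠ 0 → f z ≠ 0) :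
    ∃ g : ℂ → ℂ, DifferentiableOn ℂ g s ∧ g 0 = 1 ∧ deriv g 0 = -(iteratedDeriv 2 f 0 / 2) ∧
      ∀ z ≠ 0, g z = z / f z := by
  set u := dslope f 0
  have hu : DifferentiableOn ℂ u s := (Complex.differentiableOn_dslope hs).2 hf
  have hfu : ∀ z, f z = z * u z := fun z => by simpa [hf0] using (sub_smul_dslope f 0 z).symm
  have hu0 : u 0 = 1 := (dslope_same f 0).trans hf1
  have hu_ne : ∀ z ∈ s, u z ≠ 0 := by
    intro z hz huz
    rcases eq_or_ne z 0 with rfl | hz₀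
    · simp [hu0] at huz
    · exact hf_ne z hz hz₀ (by rw [hfu z, huz, mul_zero])
  refine ⟨fun z => (u z)⁻¹, hu.inv hu_ne, by simp [hu0], ?_,
    fun z hz => by rw [hfu z, div_mul_cancel_left₀ hz]⟩
  rw [deriv_fun_inv'' (hu.differentiableAt hs) (hu_ne 0 (mem_of_mem_nhds hs)), hu0,
    (hf.analyticAt hs).iteratedDeriv_two_eq_two_mul_deriv_dslope]
  ring

theorem stmt_0 (f : ℂ → ℂ)
    (hf : AnalyticOn ℂ f (ball 0 1))
    (hf0 : f 0 = 0) (hf1 : deriv f 0 = 1)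
    (hU : ∀ z ∈ ball (0:ℂ) 1, z ≠ 0 → ‖(z / f z) ^ 2 * deriv f z - 1‖ < 1) :
    ∃ ω : ℂ → ℂ, AnalyticOn ℂ ω (ball 0 1) ∧ ω 0 = 0 ∧ deriv ω 0 = 0 ∧
      (∀ z ∈ ball (0:ℂ) 1, ‖ω z‖ < 1) ∧
      ∀ z ∈ ball (0:ℂ) 1, z ≠ 0 →
        z / f z = 1 - (iteratedDeriv 2 f 0 / 2) * z
          - z * ∫ t in (0:ℝ)..1, (ω (t • z) / (t • z) ^ 2) * z := by
  have h0 : ball (0 : ℂ) 1 ∈ nhds 0 := ball_mem_nhds 0 one_pos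
  have hf_ne : ∀ z ∈ ball (0:ℂ) 1, z ≠ 0 → f z ≠ 0 := fun z hz hz₀ hfz => by
    simpa [hfz] using hU z hz hz₀
  obtain ⟨g, hg, hg0, hg'0, hg_div⟩ :=
    exists_differentiableOn_eq_div_of_deriv_eq_one h0 hf.differentiableOn hf0 hf1 hf_ne
  have hg' : DifferentiableOn ℂ (deriv g) (ball 0 1) := hg.deriv isOpen_ball
  refine ⟨fun z => g z - 1 - z * deriv g z, ?_, by simp [hg0], ?_, ?_, ?_⟩
  · exact ((hg.sub_const 1).sub (differentiableOn_id.mul hg')).analyticOn isOpen_ball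
  · exact (hasDerivAt_sub_sub_mul_deriv 1 (hg.differentiableAt h0)
      (hg'.differentiableAt h0)).deriv.trans (by simp)
  · intro z hz
    rcases eq_or_ne z 0 with rfl | hz₀
    · simp [hg0]
    · simpa only [sub_one_sub_mul_deriv_of_eventuallyEq_div
        (hf.differentiableOn.differentiableAt (isOpen_ball.mem_nhds hz)) (hf_ne z hz hz₀)
        (eventually_ne_nhds hz₀ |>.mono hg_div)] using hU z hz hz₀
  · intro z hz hz₀
    have hrepr := ((convex_ball (0:ℂ) 1).starConvex (mem_of_mem_nhds h0)
      ).eq_add_deriv_mul_sub_integral isOpen_ball hg hz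
    rw [hg0, hg'0] at hrepr
    rw [← hg_div z hz₀, hrepr]
    ring
end

section
/- If f(z) = z + a₂z² + a₃z³ + ⋯ is in the class U, then |a₂a₄ − a₃²| ≤ 1, and this bound is sharp (attained by the Koebe function k(z) = z/(1−z)²). -/
open Metric

/-- Membership in the class `U`. -/
def IsClassU (f : ℂ → ℂ) : Prop :=
  AnalyticOn ℂ f (ball 0 1) ∧ f 0 = 0 ∧ deriv f 0 = 1 ∧
    ∀ z ∈ ball (0:ℂ) 1, z ≠ 0 → ‖(z / f z) ^ 2 * deriv f z - 1‖ < 1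

/-- Taylor coefficient `aₙ = f⁽ⁿ⁾(0)/n!`. -/
noncomputable def coefA (f : ℂ → ℂ) (n : ℕ) : ℂ :=
  iteratedDeriv n f 0 / (n.factorial : ℂ)

/-
Write `g(z) = z / f(z) = 1 + b₁z + b₂z² + ⋯` and `χ = (g - 1) / z`. Then
`(z / f)² f' - 1 = g - z g' - 1 = -z² χ'`, so the defining condition of `U` reads `|z² χ'(z)| < 1`
and the maximum principle gives `|χ'| ≤ 1` on the disc. Comparing coefficients in `f · g = z`
turns the Hankel determinant into `a₂a₄ - a₃² = b₁b₃ - b₂²`. The Schwarz–Pick lemma for `χ'`,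
whose value and derivative at `0` are `b₂` and `2b₃`, gives `2|b₃| ≤ 1 - |b₂|²`; and `|b₁| ≤ 2`,
since for `|χ(0)| = |b₁| > 2` the map `z ↦ -1/χ(z)` contracts a small disc into itself and its
fixed point would be a zero of `g`. Hence `|b₁b₃ - b₂²| ≤ (1 - |b₂|²) + |b₂|² = 1`. For the Koebe
function `z / k(z) = (1 - z)²`, so `b₁ = -2`, `b₂ = 1`, `b₃ = 0` and the determinant is `-1`.
-/

open Filter Topology Set

lemma eq_add_sub_mul_dslope (f : ℂ → ℂ) (c z : ℂ) : f z = f c + (z - c) * dslope f c z := by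
  rw [← smul_eq_mul, sub_smul_dslope, add_sub_cancel]

lemma sq_mul_deriv_dslope {g : ℂ → ℂ} {c z : ℂ} (hg : DifferentiableAt ℂ (dslope g c) z) :
    (z - c) ^ 2 * deriv (dslope g c) z = (z - c) * deriv g z - (g z - g c) := by
  have hg_eq : g = fun w => g c + (w - c) * dslope g c w :=
    funext (eq_add_sub_mul_dslope g c)
  have hderiv : HasDerivAt (fun w => g c + (w - c) * dslope g c w)
      (1 * dslope g c z + (z - c) * deriv (dslope g c) z) z :=
    (((hasDerivAt_id' z).sub_const c).fun_mul hg.hasDerivAt).const_add (g c)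
  rw [← hg_eq] at hderiv
  rw [hderiv.deriv, eq_add_sub_mul_dslope g c z]
  ring

section TaylorCoefficients

variable {f g : ℂ → ℂ} {n : ℕ}

@[simp]
lemma coefA_zero (f : ℂ → ℂ) : coefA f 0 = f 0 := by
  simp [coefA]

lemma coefA_one (f : ℂ → ℂ) : coefA f 1 = deriv f 0 := by
  simp [coefA]

lemma coefA_congr (h : f =ᶠ[𝓝 0] g) (n : ℕ) : coefA f n = coefA g n := by
  rw [coefA, coefA, h.iteratedDeriv_eq]

lemma coefA_deriv (f : ℂ → ℂ) (n : ℕ) : coefA (deriv f) n = (n + 1) * coefA f (n + 1) := by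
  rw [coefA, coefA, ← iteratedDeriv_succ', Nat.factorial_succ]
  push_cast
  field_simp

lemma coefA_const_add (hn : n ≠ 0) (c : ℂ) : coefA (fun z => c + f z) n = coefA f n := by
  rw [coefA, coefA, iteratedDeriv_const_add (Nat.pos_of_ne_zero hn)]

lemma coefA_id (n : ℕ) : coefA (fun z => z) n = if n = 1 then 1 else 0 := by
  rw [coefA, iteratedDeriv_fun_id_zero]
  split_ifs with h <;> simp [h]

lemma coefA_mul (hf : ContDiffAt ℂ n f 0) (hg : ContDiffAt ℂ n g 0) :
    coefA (fun z => f z * g z) n = ∑ i ∈ Finset.range (n + 1), coefA f i * coefA g (n - i) := by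
  rw [coefA, iteratedDeriv_fun_mul hf hg, Finset.sum_div]
  refine Finset.sum_congr rfl fun i hi => ?_
  have hin : i ≤ n := Nat.lt_succ_iff.mp (Finset.mem_range.mp hi)
  have hfac : (n.choose i : ℂ) * i.factorial * (n - i).factorial = n.factorial := by
    exact_mod_cast Nat.choose_mul_factorial_mul_factorial hin
  have hchoose : (n.choose i : ℂ) ≠ 0 := by exact_mod_cast (Nat.choose_pos hin).ne'
  rw [coefA, coefA, ← hfac]
  field_simp

lemma coefA_id_mul (hf : ContDiffAt ℂ (n + 1) f 0) :
    coefA (fun z => z * f z) (n + 1) = coefA f n := by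
  rw [coefA_mul (by fun_prop) hf, Finset.sum_eq_single 1]
  · simp [coefA_id]
  · intro i _ hi
    simp [coefA_id, hi]
  · simp

lemma coefA_dslope (hf : AnalyticAt ℂ (dslope f 0) 0) (n : ℕ) :
    coefA (dslope f 0) n = coefA f (n + 1) := by
  have hf_eq : f = fun z => f 0 + z * dslope f 0 z :=
    funext fun z => by simpa using eq_add_sub_mul_dslope f 0 z
  conv_rhs => rw [hf_eq]
  rw [coefA_const_add n.succ_ne_zero, coefA_id_mul hf.contDiffAt]

lemma hankel_eq_of_mul_eq_id (hf : AnalyticAt ℂ f 0) (hg : AnalyticAt ℂ g 0)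
    (hfg : (fun z => f z * g z) =ᶠ[𝓝 0] fun z => z) (hf0 : f 0 = 0) (hg0 : g 0 = 1) :
    coefA f 2 * coefA f 4 - coefA f 3 ^ 2 = coefA g 1 * coefA g 3 - coefA g 2 ^ 2 := by
  have hcoef (n : ℕ) : ∑ i ∈ Finset.range (n + 1), coefA f i * coefA g (n - i) =
      if n = 1 then 1 else 0 := by
    rw [← coefA_mul hf.contDiffAt hg.contDiffAt, coefA_congr hfg, coefA_id]
  have e1 : coefA f 1 = 1 := by simpa [Finset.sum_range_succ, hf0, hg0] using hcoef 1
  have e2 : coefA g 1 + coefA f 2 = 0 := by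
    simpa [Finset.sum_range_succ, hf0, hg0, e1] using hcoef 2
  have e3 : coefA g 2 + coefA f 2 * coefA g 1 + coefA f 3 = 0 := by
    simpa [Finset.sum_range_succ, hf0, hg0, e1] using hcoef 3
  have e4 : coefA g 3 + coefA f 2 * coefA g 2 + coefA f 3 * coefA g 1 + coefA f 4 = 0 := by
    simpa [Finset.sum_range_succ, hf0, hg0, e1] using hcoef 4
  have a2 : coefA f 2 = -coefA g 1 := by linear_combination e2
  have a3 : coefA f 3 = -coefA g 2 - coefA f 2 * coefA g 1 := by linear_combination e3
  have a4 : coefA f 4 = -coefA g 3 - coefA f 2 * coefA g 2 - coefA f 3 * coefA g 1 := by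
    linear_combination e4
  rw [a4, a3, a2]
  ring

end TaylorCoefficients

lemma Complex.norm_sub_le_norm_one_sub_conj_mul {a b : ℂ} (ha : ‖a‖ ≤ 1) (hb : ‖b‖ ≤ 1) :
    ‖a - b‖ ≤ ‖1 - starRingEnd ℂ b * a‖ := by
  have key : ‖1 - starRingEnd ℂ b * a‖ ^ 2 - ‖a - b‖ ^ 2 = (1 - ‖a‖ ^ 2) * (1 - ‖b‖ ^ 2) := by
    simp only [← Complex.normSq_eq_norm_sq, Complex.normSq_apply, Complex.sub_re,
      Complex.sub_im, Complex.mul_re, Complex.mul_im, Complex.one_re, Complex.one_im,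
      Complex.conj_re, Complex.conj_im]
    ring
  have hprod : 0 ≤ (1 - ‖a‖ ^ 2) * (1 - ‖b‖ ^ 2) := by
    apply mul_nonneg <;> nlinarith [norm_nonneg a, norm_nonneg b]
  exact (pow_le_pow_iff_left₀ (norm_nonneg _) (norm_nonneg _) two_ne_zero).mp (by linarith)

lemma norm_le_one_of_norm_pow_mul_le_one {ψ : ℂ → ℂ} {n : ℕ}
    (hψ : DifferentiableOn ℂ ψ (ball 0 1)) (hbound : ∀ z ∈ ball (0 : ℂ) 1, ‖z ^ n * ψ z‖ ≤ 1)
    {z : ℂ} (hz : z ∈ ball (0 : ℂ) 1) : ‖ψ z‖ ≤ 1 := by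
  rw [mem_ball_zero_iff] at hz
  have hr (r : ℝ) (hzr : ‖z‖ < r) (hr1 : r < 1) : r ^ n * ‖ψ z‖ ≤ 1 := by
    have hr0 : 0 < r := (norm_nonneg z).trans_lt hzr
    rw [← le_div_iff₀' (by positivity)]
    refine Complex.norm_le_of_forall_mem_frontier_norm_le isBounded_ball
      (hψ.diffContOnCl_ball (closedBall_subset_ball hr1)) ?_ ?_
    · intro w hw
      rw [frontier_ball 0 hr0.ne', mem_sphere_zero_iff_norm] at hw
      have := hbound w (mem_ball_zero_iff.mpr (hw ▸ hr1))
      rw [norm_mul, norm_pow, hw] at this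
      rwa [le_div_iff₀' (by positivity)]
    · exact subset_closure (mem_ball_zero_iff.mpr hzr)
  have hlim : Tendsto (fun r : ℝ => r ^ n * ‖ψ z‖) (𝓝[<] 1) (𝓝 (‖ψ z‖)) := by
    have : Continuous fun r : ℝ => r ^ n * ‖ψ z‖ := by fun_prop
    simpa using (this.tendsto 1).mono_left nhdsWithin_le_nhds
  refine le_of_tendsto hlim ?_
  filter_upwards [Ioo_mem_nhdsLT hz] with r hzr
  exact hr r hzr.1 hzr.2

open ComplexConjugate in
/- Compose with the disc automorphism sending `ψ 0` to `0` and apply the Schwarz lemma. -/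
lemma norm_deriv_le_one_sub_norm_sq_of_norm_lt_one {ψ : ℂ → ℂ}
    (hd : DifferentiableOn ℂ ψ (ball 0 1)) (hmaps : MapsTo ψ (ball 0 1) (closedBall 0 1))
    (hc : ‖ψ 0‖ < 1) : ‖deriv ψ 0‖ ≤ 1 - ‖ψ 0‖ ^ 2 := by
  have h0 : (0 : ℂ) ∈ ball (0 : ℂ) 1 := mem_ball_self one_pos
  have hψ_le (z : ℂ) (hz : z ∈ ball (0 : ℂ) 1) : ‖ψ z‖ ≤ 1 := mem_closedBall_zero_iff.mp (hmaps hz)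
  generalize hc_def : ψ 0 = c at hc ⊢
  set φ : ℂ → ℂ := fun z => (ψ z - c) / (1 - conj c * ψ z)
  have hden (z : ℂ) (hz : z ∈ ball (0 : ℂ) 1) : 1 - conj c * ψ z ≠ 0 := by
    refine sub_ne_zero.mpr (fun h => ?_)
    have : ‖conj c * ψ z‖ < 1 := by
      rw [norm_mul, Complex.norm_conj]
      nlinarith [hψ_le z hz, norm_nonneg (ψ z), norm_nonneg c]
    rw [← h, norm_one] at this
    exact this.false
  have hφd : DifferentiableOn ℂ φ (ball 0 1) :=
    (hd.sub_const c).div ((hd.const_mul _).const_sub 1) hden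
  have hφmaps : MapsTo φ (ball 0 1) (closedBall (φ 0) 1) := by
    intro z hz
    rw [mem_closedBall, show φ 0 = 0 by simp [φ, hc_def], dist_zero_right, norm_div,
      div_le_one (norm_pos_iff.mpr (hden z hz))]
    exact Complex.norm_sub_le_norm_one_sub_conj_mul (hψ_le z hz) hc.le
  have hφ' : deriv φ 0 = deriv ψ 0 / (1 - ‖c‖ ^ 2 : ℝ) := by
    have hψ' : HasDerivAt ψ (deriv ψ 0) 0 :=
      (hd.differentiableAt (ball_mem_nhds 0 one_pos)).hasDerivAt
    have := (hψ'.sub_const c).fun_div ((hψ'.const_mul (conj c)).const_sub 1) (hden 0 h0)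
    have hden0 : 1 - conj c * c ≠ 0 := hc_def ▸ hden 0 h0
    rw [this.deriv, hc_def, sub_self, zero_mul, sub_zero]
    push_cast
    rw [← Complex.conj_mul']
    field_simp
  have hschwarz := Complex.norm_deriv_le_div_of_mapsTo_ball hφd hφmaps one_pos
  rwa [hφ', norm_div, Complex.norm_real, Real.norm_of_nonneg (by nlinarith [norm_nonneg c]),
    div_one, div_le_one (by nlinarith [norm_nonneg c])] at hschwarz

lemma norm_deriv_le_one_sub_norm_sq {ψ : ℂ → ℂ} (hd : DifferentiableOn ℂ ψ (ball 0 1))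
    (hmaps : MapsTo ψ (ball 0 1) (closedBall 0 1)) : ‖deriv ψ 0‖ ≤ 1 - ‖ψ 0‖ ^ 2 := by
  have h0 : (0 : ℂ) ∈ ball (0 : ℂ) 1 := mem_ball_self one_pos
  rcases (mem_closedBall_zero_iff.mp (hmaps h0)).eq_or_lt with hc | hc
  · have hmax : IsMaxOn (norm ∘ ψ) (ball 0 1) 0 :=
      isMaxOn_iff.mpr fun z hz => (mem_closedBall_zero_iff.mp (hmaps hz)).trans hc.ge
    have hconst := Complex.eq_const_of_exists_max hd h0 hmax
    rw [(hconst.eventuallyEq_of_mem (ball_mem_nhds 0 one_pos)).deriv_eq, hc,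
      show deriv (Function.const ℂ (ψ 0)) 0 = 0 from deriv_const 0 (ψ 0)]
    norm_num
  · exact norm_deriv_le_one_sub_norm_sq_of_norm_lt_one hd hmaps hc

lemma LipschitzOnWith.neg_inv_of_le_norm {χ : ℂ → ℂ} {s : Set ℂ} {m : ℝ}
    (hχ : LipschitzOnWith 1 χ s) (hm : 0 < m) (hle : ∀ z ∈ s, m ≤ ‖χ z‖) :
    LipschitzOnWith (m ^ 2)⁻¹.toNNReal (fun z => -(χ z)⁻¹) s := by
  refine LipschitzOnWith.of_dist_le_mul fun x hx y hy => ?_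
  have hx0 : χ x ≠ 0 := norm_pos_iff.mp (hm.trans_le (hle x hx))
  have hy0 : χ y ≠ 0 := norm_pos_iff.mp (hm.trans_le (hle y hy))
  rw [dist_eq_norm, dist_eq_norm, Real.coe_toNNReal _ (by positivity),
    show -(χ x)⁻¹ - -(χ y)⁻¹ = (χ x - χ y) / (χ x * χ y) by field_simp; ring,
    norm_div, norm_mul, div_le_iff₀ (by positivity)]
  have hnum : ‖χ x - χ y‖ ≤ ‖x - y‖ := by simpa using hχ.norm_sub_le hx hy
  have hden : m ^ 2 ≤ ‖χ x‖ * ‖χ y‖ := by nlinarith [hle x hx, hle y hy]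
  calc ‖χ x - χ y‖ ≤ ‖x - y‖ := hnum
    _ = (m ^ 2)⁻¹ * ‖x - y‖ * m ^ 2 := by field_simp
    _ ≤ (m ^ 2)⁻¹ * ‖x - y‖ * (‖χ x‖ * ‖χ y‖) := by gcongr

/- `z ↦ -(χ z)⁻¹` maps the closed disc into itself and contracts it; its fixed point is the
required `z`. -/
lemma exists_mul_eq_neg_one_of_lipschitzOnWith {χ : ℂ → ℂ} {r : ℝ} (hr : 0 ≤ r)
    (hχ : LipschitzOnWith 1 χ (closedBall 0 r)) (hm : 1 < ‖χ 0‖ - r)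
    (hrm : 1 ≤ r * (‖χ 0‖ - r)) : ∃ z ∈ closedBall (0 : ℂ) r, z * χ z = -1 := by
  set m := ‖χ 0‖ - r
  have hm0 : 0 < m := one_pos.trans hm
  have hχ_ge (z : ℂ) (hz : z ∈ closedBall (0 : ℂ) r) : m ≤ ‖χ z‖ := by
    have h1 : ‖χ z - χ 0‖ ≤ ‖z‖ := by simpa using hχ.norm_sub_le hz (mem_closedBall_self hr)
    linarith [norm_sub_norm_le (χ 0) (χ z), norm_sub_rev (χ 0) (χ z),
      mem_closedBall_zero_iff.mp hz]
  set T : ℂ → ℂ := fun z => -(χ z)⁻¹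
  have hmaps : MapsTo T (closedBall 0 r) (closedBall 0 r) := by
    intro z hz
    rw [mem_closedBall_zero_iff, norm_neg, norm_inv]
    calc ‖χ z‖⁻¹ ≤ m⁻¹ := inv_anti₀ hm0 (hχ_ge z hz)
      _ ≤ r := by rwa [inv_le_iff_one_le_mul₀ hm0]
  have hlip := hχ.neg_inv_of_le_norm hm0 hχ_ge
  have hK : (m ^ 2)⁻¹.toNNReal < 1 := by
    rw [Real.toNNReal_lt_one, inv_lt_one₀ (by positivity)]
    nlinarith
  obtain ⟨z, hz, hfix, -⟩ := ContractingWith.exists_fixedPoint' isClosed_closedBall.isComplete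
    hmaps ⟨hK, hlip.mapsToRestrict hmaps⟩ (mem_closedBall_self hr) (edist_ne_top _ _)
  refine ⟨z, hz, ?_⟩
  have : z * χ z = -(χ z)⁻¹ * χ z := congrArg (· * χ z) hfix.symm
  rw [this, neg_mul, inv_mul_cancel₀ (norm_pos_iff.mp (hm0.trans_le (hχ_ge z hz)))]

lemma norm_le_two_of_lipschitzOnWith {χ : ℂ → ℂ} (hχ : LipschitzOnWith 1 χ (ball 0 1))
    (hne : ∀ z ∈ ball (0 : ℂ) 1, 1 + z * χ z ≠ 0) : ‖χ 0‖ ≤ 2 := by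
  by_contra! hβ
  set β := ‖χ 0‖
  have hβ0 : 0 < β := by linarith
  have hr1 : 2 / β < 1 := by rwa [div_lt_one hβ0]
  have hm : 1 < β - 2 / β := by
    rw [lt_sub_iff_add_lt, ← lt_sub_iff_add_lt', div_lt_iff₀ hβ0]
    nlinarith
  have hrm : 1 ≤ 2 / β * (β - 2 / β) := by
    rw [mul_sub, div_mul_cancel₀ _ hβ0.ne', le_sub_comm, div_mul_div_comm,
      div_le_iff₀ (by positivity)]
    nlinarith
  obtain ⟨z, hz, hzχ⟩ := exists_mul_eq_neg_one_of_lipschitzOnWith (by positivity)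
    (hχ.mono (closedBall_subset_ball hr1)) hm hrm
  exact hne z (closedBall_subset_ball hr1 hz) (by rw [hzχ, add_neg_cancel])

lemma norm_deriv_dslope_le_one {g : ℂ → ℂ} (hg : DifferentiableOn ℂ g (ball 0 1))
    (hω : ∀ z ∈ ball (0 : ℂ) 1, ‖z * deriv g z - (g z - g 0)‖ < 1) :
    ∀ z ∈ ball (0 : ℂ) 1, ‖deriv (dslope g 0) z‖ ≤ 1 := by
  have hχ : DifferentiableOn ℂ (dslope g 0) (ball 0 1) :=
    (Complex.differentiableOn_dslope (ball_mem_nhds 0 one_pos)).mpr hg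
  refine fun z hz => norm_le_one_of_norm_pow_mul_le_one (n := 2) (hχ.deriv isOpen_ball)
    (fun w hw => ?_) hz
  have := sq_mul_deriv_dslope (hχ.differentiableAt (isOpen_ball.mem_nhds hw))
  rw [sub_zero] at this
  exact this ▸ (hω w hw).le

section CoefficientBounds

variable {g : ℂ → ℂ} (hg : DifferentiableOn ℂ g (ball 0 1))
  (hω : ∀ z ∈ ball (0 : ℂ) 1, ‖z * deriv g z - (g z - g 0)‖ < 1)
include hg hω

lemma norm_coefA_one_le_two (hg0 : g 0 = 1) (hne : ∀ z ∈ ball (0 : ℂ) 1, g z ≠ 0) :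
    ‖coefA g 1‖ ≤ 2 := by
  have hχ : DifferentiableOn ℂ (dslope g 0) (ball 0 1) :=
    (Complex.differentiableOn_dslope (ball_mem_nhds 0 one_pos)).mpr hg
  have hlip : LipschitzOnWith 1 (dslope g 0) (ball 0 1) :=
    (convex_ball 0 1).lipschitzOnWith_of_nnnorm_deriv_le
      (fun z hz => hχ.differentiableAt (isOpen_ball.mem_nhds hz))
      (fun z hz => by exact_mod_cast norm_deriv_dslope_le_one hg hω z hz)
  rw [coefA_one, ← dslope_same]
  refine norm_le_two_of_lipschitzOnWith hlip fun z hz => ?_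
  have := eq_add_sub_mul_dslope g 0 z
  rw [hg0, sub_zero] at this
  exact this ▸ hne z hz

lemma norm_two_mul_coefA_three_le : ‖2 * coefA g 3‖ ≤ 1 - ‖coefA g 2‖ ^ 2 := by
  have hχ : DifferentiableOn ℂ (dslope g 0) (ball 0 1) :=
    (Complex.differentiableOn_dslope (ball_mem_nhds 0 one_pos)).mpr hg
  have hχ0 : AnalyticAt ℂ (dslope g 0) 0 := hχ.analyticAt (ball_mem_nhds 0 one_pos)
  have hψ0 : deriv (dslope g 0) 0 = coefA g 2 := by
    rw [← coefA_zero (deriv _), coefA_deriv, coefA_dslope hχ0]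
    norm_num
  have hψ1 : deriv (deriv (dslope g 0)) 0 = 2 * coefA g 3 := by
    rw [← coefA_one (deriv _), coefA_deriv, coefA_dslope hχ0]
    norm_num
  rw [← hψ0, ← hψ1]
  exact norm_deriv_le_one_sub_norm_sq (hχ.deriv isOpen_ball)
    fun z hz => mem_closedBall_zero_iff.mpr (norm_deriv_dslope_le_one hg hω z hz)

end CoefficientBounds

lemma IsClassU.exists_mul_eq_id {f : ℂ → ℂ} (hf : IsClassU f) :
    ∃ g : ℂ → ℂ, DifferentiableOn ℂ g (ball 0 1) ∧ g 0 = 1 ∧ (∀ z ∈ ball (0 : ℂ) 1, g z ≠ 0) ∧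
      (∀ z ∈ ball (0 : ℂ) 1, f z * g z = z) ∧
      ∀ z ∈ ball (0 : ℂ) 1, ‖z * deriv g z - (g z - g 0)‖ < 1 := by
  obtain ⟨hfa, hf0, hf'0, hU⟩ := hf
  set h := dslope f 0
  have hfh (z : ℂ) : f z = z * h z := by simpa [hf0] using eq_add_sub_mul_dslope f 0 z
  have hh : DifferentiableOn ℂ h (ball 0 1) :=
    (Complex.differentiableOn_dslope (ball_mem_nhds 0 one_pos)).mpr hfa.differentiableOn
  have hh0 : h 0 = 1 := by rw [← hf'0]; exact dslope_same f 0
  -- `f` has no zeros off the origin: there `z / f z = 0` would make the defining quantity `-1`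
  have hne (z : ℂ) (hz : z ∈ ball (0 : ℂ) 1) : h z ≠ 0 := by
    rcases eq_or_ne z 0 with rfl | hz0
    · exact hh0 ▸ one_ne_zero
    · intro hz'
      simpa [hfh z, hz'] using hU z hz hz0
  refine ⟨fun z => (h z)⁻¹, hh.inv hne, by simp [hh0], fun z hz => inv_ne_zero (hne z hz),
    fun z hz => by rw [hfh, mul_assoc, mul_inv_cancel₀ (hne z hz), mul_one], fun z hz => ?_⟩
  rcases eq_or_ne z 0 with rfl | hz0
  · simp [hh0]
  have hh' : HasDerivAt h (deriv h z) z :=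
    (hh.differentiableAt (isOpen_ball.mem_nhds hz)).hasDerivAt
  have hf' : deriv f z = h z + z * deriv h z := by
    rw [show f = fun w => w * h w from funext hfh, ((hasDerivAt_id' z).fun_mul hh').deriv]
    ring
  simp only [(hh'.fun_inv (hne z hz)).deriv, hh0, inv_one]
  have key : z * (-deriv h z / h z ^ 2) - ((h z)⁻¹ - 1) = -((z / f z) ^ 2 * deriv f z - 1) := by
    rw [hf', hfh z]
    field_simp [hne z hz]
    ring
  rw [key, norm_neg]
  exact hU z hz hz0

theorem IsClassU.norm_hankel_le_one {f : ℂ → ℂ} (hf : IsClassU f) :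
    ‖coefA f 2 * coefA f 4 - coefA f 3 ^ 2‖ ≤ 1 := by
  obtain ⟨g, hg, hg0, hne, hfg, hω⟩ := hf.exists_mul_eq_id
  have h0 : ball (0 : ℂ) 1 ∈ 𝓝 0 := ball_mem_nhds 0 one_pos
  rw [hankel_eq_of_mul_eq_id (hf.1.analyticAt h0) (hg.analyticAt h0)
    (eventually_of_mem h0 hfg) hf.2.1 hg0]
  have hb1 := norm_coefA_one_le_two hg hω hg0 hne
  have hb3 := norm_two_mul_coefA_three_le hg hω
  rw [norm_mul, Complex.norm_two] at hb3
  calc ‖coefA g 1 * coefA g 3 - coefA g 2 ^ 2‖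
      ≤ ‖coefA g 1‖ * ‖coefA g 3‖ + ‖coefA g 2‖ ^ 2 := by
        rw [← norm_mul, ← norm_pow]
        exact norm_sub_le _ _
    _ ≤ 1 := by nlinarith [norm_nonneg (coefA g 3)]

noncomputable def koebe (z : ℂ) : ℂ := z / (1 - z) ^ 2

lemma hasDerivAt_koebe {z : ℂ} (hz : z ≠ 1) : HasDerivAt koebe ((1 + z) / (1 - z) ^ 3) z := by
  have h1z : 1 - z ≠ 0 := sub_ne_zero.mpr hz.symm
  refine ((hasDerivAt_id' z).fun_div (((hasDerivAt_id' z).const_sub 1).fun_pow 2)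
    (pow_ne_zero 2 h1z)).congr_deriv ?_
  field_simp
  ring

lemma differentiableOn_koebe : DifferentiableOn ℂ koebe {1}ᶜ := fun _ hz =>
  (hasDerivAt_koebe hz).differentiableAt.differentiableWithinAt

lemma isClassU_koebe : IsClassU koebe := by
  have hne {z : ℂ} (hz : z ∈ ball (0 : ℂ) 1) : z ≠ 1 := by
    rintro rfl
    simp at hz
  refine ⟨(differentiableOn_koebe.analyticOnNhd isOpen_compl_singleton).analyticOn.mono
    fun z hz => hne hz, by simp [koebe], ?_, fun z hz hz0 => ?_⟩
  · rw [(hasDerivAt_koebe zero_ne_one).deriv]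
    norm_num
  have h1z : 1 - z ≠ 0 := sub_ne_zero.mpr (hne hz).symm
  have key : (z / koebe z) ^ 2 * ((1 + z) / (1 - z) ^ 3) - 1 = -z ^ 2 := by
    simp only [koebe]
    field_simp
    ring
  rw [(hasDerivAt_koebe (hne hz)).deriv, key, norm_neg, norm_pow]
  have := mem_ball_zero_iff.mp hz
  nlinarith [norm_nonneg z]

lemma hankel_koebe : coefA koebe 2 * coefA koebe 4 - coefA koebe 3 ^ 2 = -1 := by
  have h1 : {1}ᶜ ∈ 𝓝 (0 : ℂ) := isOpen_compl_singleton.mem_nhds zero_ne_one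
  have hmul : (fun z => koebe z * (1 - z) ^ 2) =ᶠ[𝓝 0] fun z => z := by
    filter_upwards [h1] with z hz
    exact div_mul_cancel₀ z (pow_ne_zero 2 (sub_ne_zero.mpr (Ne.symm hz)))
  rw [hankel_eq_of_mul_eq_id (differentiableOn_koebe.analyticAt h1) (by fun_prop) hmul
    (by simp [koebe]) (by simp)]
  have hsq (n : ℕ) : coefA (fun z : ℂ => (1 - z) ^ 2) (n + 1) = coefA (fun z => -2 + z) n := by
    rw [show (fun z : ℂ => (1 - z) ^ 2) = fun z => 1 + z * (-2 + z) by funext; ring,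
      coefA_const_add n.succ_ne_zero, coefA_id_mul (by fun_prop)]
  simp only [hsq, coefA_zero]
  rw [coefA_const_add one_ne_zero, coefA_const_add two_ne_zero, coefA_id, coefA_id]
  norm_num

theorem stmt_6 :
    (∀ f : ℂ → ℂ, IsClassU f →
      ‖coefA f 2 * coefA f 4 - (coefA f 3) ^ 2‖ ≤ 1) ∧
    (IsClassU (fun z => z / (1 - z) ^ 2) ∧
      ‖coefA (fun z => z / (1 - z) ^ 2) 2 * coefA (fun z => z / (1 - z) ^ 2) 4
        - (coefA (fun z => z / (1 - z) ^ 2) 3) ^ 2‖ = 1) :=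
  ⟨fun _ hf => hf.norm_hankel_le_one, isClassU_koebe, (congrArg norm hankel_koebe).trans (by simp)⟩
end

section
/- The function f(z) = z/(1 − z³/2) belongs to the class U, and its third Hankel determinant satisfies H₃(1) = −1/4, so |H₃(1)| = 1/4. -/
open Metric

/-- Third Hankel determinant `H₃(1)`. -/
noncomputable def H31 (f : ℂ → ℂ) : ℂ :=
  coefA f 3 * (coefA f 2 * coefA f 4 - (coefA f 3) ^ 2)
    - coefA f 4 * (coefA f 4 - coefA f 2 * coefA f 3)
    + coefA f 5 * (coefA f 3 - (coefA f 2) ^ 2)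

/-!
The function is the member `c = 1/2` of the family `f_c(z) = z / (1 - c z³)`. Expanding the
geometric series, `f_c(z) = ∑ₖ cᵏ z^{3k+1}`, so `a₄ = c` and `a₂ = a₃ = a₅ = 0`, whence
`H₃(1) = -a₄² = -c²`. Moreover `(z / f_c z)² f_c'(z) = 1 + 2 c z³`, so `f_c ∈ U` as soon as
`‖c‖ ≤ 1/2`.
-/

lemma coefA_eq_of_hasFPowerSeriesOnBall {f : ℂ → ℂ} {a : ℕ → ℂ} {r : ENNReal}
    (hf : HasFPowerSeriesOnBall f (FormalMultilinearSeries.ofScalars ℂ a) 0 r) (n : ℕ) :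
    coefA f n = a n := by
  have h := hf.factorial_smul 1 n
  rw [FormalMultilinearSeries.ofScalars_apply_eq, one_pow, smul_eq_mul, mul_one,
    ← iteratedDeriv_eq_iteratedFDeriv, nsmul_eq_mul] at h
  rw [coefA, ← h, mul_div_cancel_left₀ _ (by exact_mod_cast n.factorial_ne_zero)]

section CubicGeom

variable {c z : ℂ}

noncomputable def cubicGeom (c : ℂ) (z : ℂ) : ℂ := z / (1 - c * z ^ 3)

noncomputable def cubicGeomCoeff (c : ℂ) (n : ℕ) : ℂ := if n % 3 = 1 then c ^ (n / 3) else 0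

lemma norm_mul_pow_three_lt_one (hc : ‖c‖ ≤ 1) (hz : ‖z‖ < 1) : ‖c * z ^ 3‖ < 1 := by
  rw [norm_mul, norm_pow]
  calc ‖c‖ * ‖z‖ ^ 3 ≤ 1 * ‖z‖ ^ 3 := by gcongr
    _ < 1 := by rw [one_mul]; exact pow_lt_one₀ (norm_nonneg z) hz three_ne_zero

lemma one_sub_mul_pow_three_ne_zero (hc : ‖c‖ ≤ 1) (hz : ‖z‖ < 1) : 1 - c * z ^ 3 ≠ 0 := by
  intro h
  have := norm_mul_pow_three_lt_one hc hz
  rw [← sub_eq_zero.mp h, norm_one] at this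
  exact this.false

lemma hasFPowerSeriesOnBall_cubicGeom (hc : ‖c‖ ≤ 1) :
    HasFPowerSeriesOnBall (cubicGeom c)
      (FormalMultilinearSeries.ofScalars ℂ (cubicGeomCoeff c)) 0 1 where
  r_le := by
    refine le_trans (by norm_num) (FormalMultilinearSeries.le_radius_of_bound _ 1 (r := 1) ?_)
    intro n
    rw [FormalMultilinearSeries.ofScalars_norm, NNReal.coe_one, one_pow, mul_one, cubicGeomCoeff]
    split_ifs
    · rw [norm_pow]; exact pow_le_one₀ (norm_nonneg c) hc
    · simp
  r_pos := one_pos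
  hasSum := by
    intro y hy
    have hy : ‖y‖ < 1 := by simpa [← ofReal_norm] using hy
    simp only [FormalMultilinearSeries.ofScalars_apply_eq, zero_add]
    have hinj : Function.Injective (fun k : ℕ => 3 * k + 1) := fun a b h => by
      simp only at h; omega
    have hsupp : ∀ n ∉ Set.range (fun k : ℕ => 3 * k + 1), cubicGeomCoeff c n • y ^ n = 0 := by
      intro n hn
      have : n % 3 ≠ 1 := fun h => hn ⟨n / 3, show 3 * (n / 3) + 1 = n by omega⟩
      simp [cubicGeomCoeff, this]
    refine (hinj.hasSum_iff hsupp).mp ?_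
    have hgeom := (hasSum_geometric_of_norm_lt_one (norm_mul_pow_three_lt_one hc hy)).mul_left y
    refine hgeom.congr_fun fun k => ?_
    simp only [Function.comp_apply, cubicGeomCoeff, if_pos (show (3 * k + 1) % 3 = 1 by omega),
      show (3 * k + 1) / 3 = k by omega, smul_eq_mul]
    ring

lemma coefA_cubicGeom (hc : ‖c‖ ≤ 1) (n : ℕ) : coefA (cubicGeom c) n = cubicGeomCoeff c n :=
  coefA_eq_of_hasFPowerSeriesOnBall (hasFPowerSeriesOnBall_cubicGeom hc) n

lemma H31_cubicGeom (hc : ‖c‖ ≤ 1) : H31 (cubicGeom c) = -c ^ 2 := by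
  simp only [H31, coefA_cubicGeom hc, cubicGeomCoeff]
  norm_num
  ring

lemma hasDerivAt_cubicGeom (h : 1 - c * z ^ 3 ≠ 0) :
    HasDerivAt (cubicGeom c) ((1 + 2 * c * z ^ 3) / (1 - c * z ^ 3) ^ 2) z := by
  have hden : HasDerivAt (fun z : ℂ => 1 - c * z ^ 3) (-(c * (3 * z ^ 2))) z := by
    simpa using ((hasDerivAt_pow 3 z).const_mul c).const_sub 1
  refine ((hasDerivAt_id' z).fun_div hden h).congr_deriv ?_
  ring

lemma sq_div_cubicGeom_mul_deriv_sub_one (hz : z ≠ 0) (h : 1 - c * z ^ 3 ≠ 0) :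
    (z / cubicGeom c z) ^ 2 * deriv (cubicGeom c) z - 1 = 2 * c * z ^ 3 := by
  have hfz : z / cubicGeom c z = 1 - c * z ^ 3 := by
    rw [cubicGeom]; field_simp
  rw [(hasDerivAt_cubicGeom h).deriv, hfz]
  field_simp
  ring

lemma isClassU_cubicGeom (hc : ‖c‖ ≤ 1 / 2) : IsClassU (cubicGeom c) := by
  have hc1 : ‖c‖ ≤ 1 := hc.trans (by norm_num)
  refine ⟨?analytic, by simp [cubicGeom], ?deriv, ?bound⟩
  case analytic =>
    refine analyticOn_id.div (analyticOn_const.sub (analyticOn_const.mul (analyticOn_id.pow 3)))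
      fun z hz => ?_
    exact one_sub_mul_pow_three_ne_zero hc1 (by simpa using hz)
  case deriv => simpa using (hasDerivAt_cubicGeom (c := c) (z := 0) (by simp)).deriv
  case bound =>
    intro z hz hz0
    have hz : ‖z‖ < 1 := by simpa using hz
    rw [sq_div_cubicGeom_mul_deriv_sub_one hz0 (one_sub_mul_pow_three_ne_zero hc1 hz)]
    have h2c : ‖2 * c‖ ≤ 1 := by rw [norm_mul, Complex.norm_two]; linarith
    simpa [← mul_assoc] using norm_mul_pow_three_lt_one h2c hz

end CubicGeom

theorem stmt_8 :
    IsClassU (fun z => z / (1 - z ^ 3 / 2)) ∧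
    H31 (fun z => z / (1 - z ^ 3 / 2)) = -(1 / 4) ∧
    ‖H31 (fun z => z / (1 - z ^ 3 / 2))‖ = 1 / 4 := by
  have hf : (fun z : ℂ => z / (1 - z ^ 3 / 2)) = cubicGeom (1 / 2) := by
    funext z; rw [cubicGeom]; ring
  have hc : ‖(1 / 2 : ℂ)‖ ≤ 1 / 2 := by norm_num
  have hH : H31 (cubicGeom (1 / 2)) = -(1 / 4) := by
    rw [H31_cubicGeom (hc.trans (by norm_num))]; norm_num
  rw [hf, hH]
  exact ⟨isClassU_cubicGeom hc, rfl, by norm_num⟩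
end

section
/- The function g(z) = −log(1−z) (principal branch, g(0)=0) is convex on the unit disk (i.e. Re[1 + z g''(z)/g'(z)] > 0 for |z|<1) but does not belong to the class U; in particular |U_g(0.99)| > 1. -/
/-!
Since `g' = (1 - z)⁻¹` and `g'' = (1 - z)⁻²`, one gets `1 + z g''/g' = (1 - z)⁻¹`, whose real
part is positive on the unit disk because `Re (1 - z) > 0` there. On the other hand
`g(0.99) = log 100 < 7` and `g'(0.99) = 100`, so `U_g(0.99) = 98.01 / (log 100)² - 1 > 98.01 / 49 - 1 > 1`.
-/

open Metric Complex

lemma re_one_sub_pos_of_norm_lt_one {z : ℂ} (hz : ‖z‖ < 1) : 0 < (1 - z).re := by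
  rw [sub_re, one_re, sub_pos]
  exact (re_le_norm z).trans_lt hz

lemma hasDerivAt_neg_log_one_sub {z : ℂ} (hz : 1 - z ∈ slitPlane) :
    HasDerivAt (fun w => -log (1 - w)) (1 - z)⁻¹ z :=
  (((hasDerivAt_id' z).const_sub 1).clog hz).neg.congr_deriv (by rw [neg_div, neg_neg, one_div])

lemma deriv_neg_log_one_sub {z : ℂ} (hz : 1 - z ∈ slitPlane) :
    deriv (fun w => -log (1 - w)) z = (1 - z)⁻¹ :=
  (hasDerivAt_neg_log_one_sub hz).deriv

lemma deriv_deriv_neg_log_one_sub {z : ℂ} (hz : 1 - z ∈ slitPlane) :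
    deriv (deriv fun w => -log (1 - w)) z = ((1 - z) ^ 2)⁻¹ := by
  have hopen : IsOpen {w : ℂ | 1 - w ∈ slitPlane} :=
    isOpen_slitPlane.preimage (continuous_const.sub continuous_id)
  have hderiv : deriv (fun w => -log (1 - w)) =ᶠ[nhds z] fun w => (1 - w)⁻¹ :=
    Filter.eventually_of_mem (hopen.mem_nhds hz) fun w hw => deriv_neg_log_one_sub hw
  rw [hderiv.deriv_eq]
  exact (((hasDerivAt_id' z).const_sub 1).fun_inv (slitPlane_ne_zero hz)).deriv.trans
    (by rw [neg_neg, one_div])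

lemma one_add_mul_deriv_deriv_div_deriv_neg_log_one_sub {z : ℂ} (hz : 1 - z ∈ slitPlane) :
    1 + z * deriv (deriv fun w => -log (1 - w)) z / deriv (fun w => -log (1 - w)) z
      = (1 - z)⁻¹ := by
  have hne := slitPlane_ne_zero hz
  rw [deriv_deriv_neg_log_one_sub hz, deriv_neg_log_one_sub hz]
  field_simp
  ring

lemma Real.log_hundred_lt_seven : Real.log 100 < 7 := by
  have h : (100 : ℝ) < Real.exp 1 ^ 7 :=
    calc (100 : ℝ) < 2 ^ 7 := by norm_num
      _ < Real.exp 1 ^ 7 := by gcongr; linarith [Real.exp_one_gt_d9]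
  rwa [Real.log_lt_iff_lt_exp (by norm_num), show (7 : ℝ) = (7 : ℕ) by norm_num,
    ← Real.exp_one_pow]

lemma norm_U_neg_log_one_sub_ofReal {x : ℝ} (hx : x < 1) :
    ‖((x : ℂ) / -log (1 - x)) ^ 2 * deriv (fun w => -log (1 - w)) x - 1‖
      = |(x / Real.log (1 - x)) ^ 2 / (1 - x) - 1| := by
  have hpos : 0 < 1 - x := sub_pos.mpr hx
  have hslit : 1 - (x : ℂ) ∈ slitPlane := by
    rw [← ofReal_one, ← ofReal_sub]; exact ofReal_mem_slitPlane.mpr hpos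
  rw [deriv_neg_log_one_sub hslit, ← ofReal_one, ← ofReal_sub, ← ofReal_log hpos.le,
    ← Real.norm_eq_abs, ← norm_real]
  congr 1
  push_cast
  ring

lemma one_lt_norm_U_neg_log_one_sub :
    1 < ‖((0.99 : ℂ) / -log (1 - 0.99)) ^ 2 * deriv (fun w => -log (1 - w)) 0.99 - 1‖ := by
  have h := norm_U_neg_log_one_sub_ofReal (x := 0.99) (by norm_num)
  push_cast at h
  rw [h, show (1 - 0.99 : ℝ) = 100⁻¹ by norm_num, Real.log_inv, div_neg, neg_sq,
    div_pow, div_inv_eq_mul, lt_abs]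
  left
  have hL : 0 < Real.log 100 := Real.log_pos (by norm_num)
  have hL7 := Real.log_hundred_lt_seven
  rw [lt_sub_iff_add_lt, div_mul_eq_mul_div, lt_div_iff₀ (by positivity)]
  nlinarith

theorem stmt_11 (g : ℂ → ℂ) (hg : g = fun z => -Complex.log (1 - z)) :
    (∀ z ∈ ball (0:ℂ) 1,
      0 < ((1 : ℂ) + z * deriv (deriv g) z / deriv g z).re) ∧
    ¬ (∀ z ∈ ball (0:ℂ) 1, z ≠ 0 → ‖(z / g z) ^ 2 * deriv g z - 1‖ < 1) ∧
    1 < ‖((0.99 : ℂ) / g 0.99) ^ 2 * deriv g 0.99 - 1‖ := by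
  subst hg
  refine ⟨fun z hz => ?_, fun hU => ?_, one_lt_norm_U_neg_log_one_sub⟩
  · have hre := re_one_sub_pos_of_norm_lt_one (mem_ball_zero_iff.mp hz)
    rw [one_add_mul_deriv_deriv_div_deriv_neg_log_one_sub (Or.inl hre), inv_re]
    exact div_pos hre (normSq_pos.mpr (slitPlane_ne_zero (Or.inl hre)))
  · have hmem : (0.99 : ℂ) ∈ ball (0 : ℂ) 1 := by
      rw [mem_ball_zero_iff]; norm_num
    exact (hU 0.99 hmem (by norm_num)).not_gt one_lt_norm_U_neg_log_one_sub
end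

section
/- Let α ≤ −1. If f is α-convex (i.e. f is analytic on the unit disk with f(0)=0, f'(0)=1, f(z)f'(z)/z ≠ 0, and Re[(1−α)·zf'(z)/f(z) + α·(1 + zf''(z)/f'(z))] > 0 for all |z|<1), and f is starlike (Re[zf'(z)/f(z)] > 0), then f belongs to the class U, i.e. |(z/f(z))² f'(z) − 1| < 1 on the disk. -/
/-!
Put `w(z) = (z / f z)² f'(z) - 1`; it is holomorphic in the disk with a double zero at `0`.
If `|w|` reached `1`, Jack's lemma would give a point `z₀` where `|w|` attains its maximum over
`|z| ≤ |z₀|`, with `|w(z₀)| ≥ 1` and `z₀ w'(z₀) = c w(z₀)` for a real `c ≥ 2`. Logarithmic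
differentiation of `w + 1 = z² f' / f²` expresses `1 + z₀ f''/f'` through `c w/(w + 1)` and
`z₀ f'/f`. As `Re (w/(w + 1)) ≥ 1/2` when `|w| ≥ 1`, the real part of the α-convexity expression
at `z₀` is at most `(1 + α) Re (z₀ f'/f) + α (c/2 - 1) ≤ 0` for `α ≤ -1`, a contradiction.
-/

open Metric Set Filter Complex ComplexConjugate Topology

theorem inner_deriv_nonpos_of_norm_le {F : Type*} [NormedAddCommGroup F] [InnerProductSpace ℝ F]
    {u : ℝ → F} {u' : F} (hu : HasDerivAt u u' 0) (hle : ∀ t ∈ Icc (0 : ℝ) 1, ‖u t‖ ≤ ‖u 0‖) :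
    inner ℝ (u 0) u' ≤ 0 := by
  have hmax : IsLocalMaxOn (‖u ·‖ ^ 2) (Icc 0 1) 0 :=
    (IsMaxOn.localize fun t ht => by
      simpa using pow_le_pow_left₀ (norm_nonneg _) (hle t ht) 2)
  have hcone : (1 : ℝ) ∈ posTangentConeAt (Icc 0 1) 0 :=
    mem_posTangentConeAt_of_segment_subset (by simp [segment_eq_Icc])
  have h2 : 2 * inner ℝ (u 0) u' ≤ 0 := by
    simpa using hmax.hasFDerivWithinAt_nonpos hu.norm_sq.hasFDerivAt.hasFDerivWithinAt hcone
  linarith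

theorem exists_nonneg_mul_deriv_eq_of_isMaxOn {V : ℂ → ℂ} {z₀ : ℂ}
    (hV : DifferentiableAt ℂ V z₀) (hmax : IsMaxOn (‖V ·‖) (closedBall 0 ‖z₀‖) z₀)
    (hV₀ : V z₀ ≠ 0) : ∃ c : ℝ, 0 ≤ c ∧ z₀ * deriv V z₀ = c * V z₀ := by
  set q := z₀ * deriv V z₀ * conj (V z₀)
  -- The curve `t ↦ exp (a t) z₀`, `t ≥ 0`, stays in the disk; `a = -1, ±I` make `q` real, `≥ 0`.
  have key : ∀ a : ℂ, a.re ≤ 0 → (a * q).re ≤ 0 := by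
    intro a ha
    have hγ : HasDerivAt (fun t : ℝ => exp (a * t) * z₀) (a * z₀) 0 := by
      simpa using (((hasDerivAt_id (0 : ℂ)).const_mul a).cexp.mul_const z₀).comp_ofReal
    have hu := (show HasDerivAt V (deriv V z₀) (exp (a * (0 : ℝ)) * z₀) by
      simpa using hV.hasDerivAt).comp (0 : ℝ) hγ
    have hle : ∀ t ∈ Icc (0 : ℝ) 1, ‖exp (a * t) * z₀‖ ≤ ‖z₀‖ := fun t ht => by
      rw [norm_mul, norm_exp]
      refine mul_le_of_le_one_left (norm_nonneg _) (Real.exp_le_one_iff.2 ?_)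
      simpa using mul_nonpos_of_nonpos_of_nonneg ha ht.1
    have := inner_deriv_nonpos_of_norm_le hu fun t ht => by
      simpa using hmax (mem_closedBall_zero_iff.2 (hle t ht))
    rw [Complex.inner] at this
    convert this using 2
    simp only [Function.comp_apply, ofReal_zero, mul_zero, exp_zero, one_mul, q]
    ring
  have hre : 0 ≤ q.re := by simpa using key (-1) (by simp)
  have him : q.im = 0 := le_antisymm (by simpa using key (-I) (by simp))
    (by simpa using key I (by simp))
  have hq : q = q.re := Complex.ext rfl (by simp [him])
  have hconj : conj (V z₀) ≠ 0 := (map_ne_zero _).2 hV₀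
  refine ⟨q.re / normSq (V z₀), div_nonneg hre (normSq_nonneg _), ?_⟩
  rw [ofReal_div, ← hq, ← mul_conj]
  field_simp
  rfl

theorem isMaxOn_closedBall_of_isMaxOn_pow_mul (n : ℕ) {V : ℂ → ℂ} {z₀ : ℂ} (hz₀ : z₀ ≠ 0)
    (hV : DiffContOnCl ℂ V (ball 0 ‖z₀‖))
    (hmax : IsMaxOn (fun z => ‖z ^ n * V z‖) (closedBall 0 ‖z₀‖) z₀) :
    IsMaxOn (‖V ·‖) (closedBall 0 ‖z₀‖) z₀ := by
  have hr : ‖z₀‖ ≠ 0 := norm_ne_zero_iff.2 hz₀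
  intro y hy
  rw [← closure_ball 0 hr] at hy
  refine Complex.norm_le_of_forall_mem_frontier_norm_le isBounded_ball hV (fun x hx => ?_) hy
  rw [frontier_ball 0 hr, mem_sphere_zero_iff_norm] at hx
  have hxz := isMaxOn_iff.1 hmax x (mem_closedBall_zero_iff.2 hx.le)
  simp only [norm_mul, norm_pow, hx] at hxz
  exact le_of_mul_le_mul_left hxz (by positivity)

theorem exists_le_mul_deriv_pow_mul_eq_of_isMaxOn (n : ℕ) {V : ℂ → ℂ} {z₀ : ℂ} (hz₀ : z₀ ≠ 0)
    (hV : ∀ z ∈ closedBall 0 ‖z₀‖, DifferentiableAt ℂ V z)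
    (hmax : IsMaxOn (fun z => ‖z ^ n * V z‖) (closedBall 0 ‖z₀‖) z₀) (hV₀ : V z₀ ≠ 0) :
    ∃ c : ℝ, n ≤ c ∧ z₀ * deriv (fun z => z ^ n * V z) z₀ = c * (z₀ ^ n * V z₀) := by
  have hVcl : DiffContOnCl ℂ V (ball 0 ‖z₀‖) := by
    refine DifferentiableOn.diffContOnCl fun z hz => (hV z ?_).differentiableWithinAt
    rwa [closure_ball 0 (norm_ne_zero_iff.2 hz₀)] at hz
  obtain ⟨c, hc, hcV⟩ := exists_nonneg_mul_deriv_eq_of_isMaxOn (hV z₀ (by simp))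
    (isMaxOn_closedBall_of_isMaxOn_pow_mul n hz₀ hVcl hmax) hV₀
  refine ⟨n + c, by linarith, ?_⟩
  rw [((hasDerivAt_pow n z₀).fun_mul (hV z₀ (by simp)).hasDerivAt).deriv]
  rcases n with _ | n
  · simp [hcV]
  · push_cast
    linear_combination z₀ ^ (n + 1) * hcV

theorem exists_isMaxOn_closedBall_of_norm_lt_le {E F : Type*} [NormedAddCommGroup E]
    [ProperSpace E] [NormedAddCommGroup F] {w : E → F} {a : ℝ} {z₁ : E}
    (hw : ContinuousOn w (closedBall 0 ‖z₁‖)) (h0 : ‖w 0‖ < a) (h1 : a ≤ ‖w z₁‖) :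
    ∃ z₀, z₀ ≠ 0 ∧ ‖z₀‖ ≤ ‖z₁‖ ∧ a ≤ ‖w z₀‖ ∧ IsMaxOn (‖w ·‖) (closedBall 0 ‖z₀‖) z₀ := by
  set T := closedBall 0 ‖z₁‖ ∩ {z | a ≤ ‖w z‖}
  have hT : IsCompact T := (isCompact_closedBall 0 _).of_isClosed_subset
    (hw.norm.preimage_isClosed_of_isClosed isClosed_closedBall isClosed_Ici) inter_subset_left
  obtain ⟨t, htT, htmin⟩ := hT.exists_isMinOn ⟨z₁, by simp [T, h1]⟩ continuous_norm.continuousOn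
  have ht : closedBall (0 : E) ‖t‖ ⊆ closedBall 0 ‖z₁‖ :=
    closedBall_subset_closedBall (by simpa using htT.1)
  obtain ⟨z₀, hz₀, hmax⟩ := (isCompact_closedBall (0 : E) ‖t‖).exists_isMaxOn
    ⟨t, by simp⟩ (hw.mono ht).norm
  have ha : a ≤ ‖w z₀‖ := htT.2.trans (hmax (by simp))
  have hnorm : ‖z₀‖ = ‖t‖ :=
    (mem_closedBall_zero_iff.1 hz₀).antisymm (isMinOn_iff.1 htmin z₀ ⟨ht hz₀, ha⟩)
  refine ⟨z₀, ?_, mem_closedBall_zero_iff.1 (ht hz₀), ha, by rwa [hnorm]⟩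
  rintro rfl
  exact (h0.trans_le ha).false

theorem exists_le_mul_deriv_eq_of_one_le_norm {n : ℕ} (hn : n ≠ 0) {w V : ℂ → ℂ}
    (hV : DifferentiableOn ℂ V (ball 0 1)) (hw : w = fun z => z ^ n * V z) {z₁ : ℂ}
    (hz₁ : z₁ ∈ ball 0 1) (h1 : 1 ≤ ‖w z₁‖) :
    ∃ z₀ ∈ ball (0 : ℂ) 1, z₀ ≠ 0 ∧ 1 ≤ ‖w z₀‖ ∧
      ∃ c : ℝ, n ≤ c ∧ z₀ * deriv w z₀ = c * w z₀ := by
  subst hw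
  have hball : closedBall (0 : ℂ) ‖z₁‖ ⊆ ball 0 1 :=
    closedBall_subset_ball (mem_ball_zero_iff.1 hz₁)
  have hcont : ContinuousOn (fun z => z ^ n * V z) (ball 0 1) :=
    (continuous_pow n).continuousOn.mul hV.continuousOn
  obtain ⟨z₀, hz₀0, hz₀z₁, hz₀w, hmax⟩ :=
    exists_isMaxOn_closedBall_of_norm_lt_le (hcont.mono hball) (by simp [hn]) h1
  have hcl : closedBall (0 : ℂ) ‖z₀‖ ⊆ ball 0 1 := (closedBall_subset_closedBall hz₀z₁).trans hball
  refine ⟨z₀, hcl (by simp), hz₀0, hz₀w, exists_le_mul_deriv_pow_mul_eq_of_isMaxOn n hz₀0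
    (fun z hz => hV.differentiableAt (isOpen_ball.mem_nhds (hcl hz))) hmax ?_⟩
  rintro hV0
  norm_num [hV0] at hz₀w

theorem exists_eq_sq_mul_of_deriv_eq_zero {w : ℂ → ℂ} {s : Set ℂ} (hs : IsOpen s) (h0 : 0 ∈ s)
    (hw : DifferentiableOn ℂ w s) (hw0 : w 0 = 0) (hw'0 : deriv w 0 = 0) :
    ∃ V : ℂ → ℂ, DifferentiableOn ℂ V s ∧ w = fun z => z ^ 2 * V z := by
  have hzero : ∀ k < 2, (Function.swap dslope 0)^[k] w 0 = 0 := by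
    intro k hk
    interval_cases k
    · exact hw0
    · exact (dslope_same _ _).trans hw'0
  refine ⟨dslope (dslope w 0) 0, (differentiableOn_dslope (hs.mem_nhds h0)).2
    ((differentiableOn_dslope (hs.mem_nhds h0)).2 hw), funext fun z => ?_⟩
  have := pow_sub_smul_iterate_dslope_of_zero 2 hzero z
  rw [sub_zero, smul_eq_mul] at this
  exact this.symm

theorem deriv_eq_dslope_add_sub_mul_deriv_dslope {𝕜 : Type*} [NontriviallyNormedField 𝕜]
    {f : 𝕜 → 𝕜} {a z : 𝕜} (h : DifferentiableAt 𝕜 (dslope f a) z) :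
    deriv f z = dslope f a z + (z - a) * deriv (dslope f a) z := by
  have hf : f = fun y => f a + (y - a) * dslope f a y :=
    funext fun y => by rw [← smul_eq_mul, sub_smul_dslope, add_sub_cancel]
  rw [show deriv f z = deriv (fun y => f a + (y - a) * dslope f a y) z from
    congrArg (deriv · z) hf, deriv_const_add]
  simpa using (((hasDerivAt_id' z).sub_const a).fun_mul h.hasDerivAt).deriv

theorem deriv_deriv_eq_two_mul_deriv_dslope {f : ℂ → ℂ} {s : Set ℂ} {a : ℂ} (hs : IsOpen s)
    (ha : a ∈ s) (hf : DifferentiableOn ℂ f s) :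
    deriv (deriv f) a = 2 * deriv (dslope f a) a := by
  have hh : DifferentiableOn ℂ (dslope f a) s := (differentiableOn_dslope (hs.mem_nhds ha)).2 hf
  have hderiv : deriv f =ᶠ[𝓝 a] fun z => dslope f a z + (z - a) * deriv (dslope f a) z := by
    filter_upwards [hs.mem_nhds ha] with z hz
    exact deriv_eq_dslope_add_sub_mul_deriv_dslope (hh.differentiableAt (hs.mem_nhds hz))
  have hh' := (hh.deriv hs).differentiableAt (hs.mem_nhds ha)
  rw [hderiv.deriv_eq,
    ((hh.differentiableAt (hs.mem_nhds ha)).hasDerivAt.fun_add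
      (((hasDerivAt_id' a).sub_const a).fun_mul hh'.hasDerivAt)).deriv]
  ring

/-- `(z / f z) ^ 2 * f' z - 1`, written with `f z = z * dslope f 0 z` so that it is
holomorphic at `0`. -/
noncomputable def uDefect (f : ℂ → ℂ) (z : ℂ) : ℂ :=
  deriv f z / dslope f 0 z ^ 2 - 1

section uDefect

variable {f : ℂ → ℂ} {s : Set ℂ}

theorem mul_dslope_zero_of_apply_zero (hf0 : f 0 = 0) (z : ℂ) : z * dslope f 0 z = f z := by
  simpa using sub_smul_dslope_of_zero hf0 z

theorem dslope_zero_ne_zero (hf0 : f 0 = 0) {z : ℂ} (hfz : f z ≠ 0) : dslope f 0 z ≠ 0 :=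
  right_ne_zero_of_mul (a := z) ((mul_dslope_zero_of_apply_zero hf0 z).trans_ne hfz)

theorem uDefect_eq (hf0 : f 0 = 0) {z : ℂ} (hz : z ≠ 0) :
    uDefect f z = (z / f z) ^ 2 * deriv f z - 1 := by
  rw [uDefect, ← mul_dslope_zero_of_apply_zero hf0 z, div_mul_cancel_left₀ hz, inv_pow,
    inv_mul_eq_div]

theorem uDefect_zero (hf1 : deriv f 0 = 1) : uDefect f 0 = 0 := by
  simp [uDefect, dslope_same, hf1]

theorem differentiableOn_uDefect (hs : IsOpen s) (h0 : 0 ∈ s) (hf : DifferentiableOn ℂ f s)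
    (hne : ∀ z ∈ s, dslope f 0 z ≠ 0) : DifferentiableOn ℂ (uDefect f) s :=
  ((hf.deriv hs).div (((differentiableOn_dslope (hs.mem_nhds h0)).2 hf).pow 2)
    fun z hz => pow_ne_zero 2 (hne z hz)).sub_const 1

theorem deriv_uDefect_zero (hs : IsOpen s) (h0 : 0 ∈ s) (hf : DifferentiableOn ℂ f s)
    (hf1 : deriv f 0 ≠ 0) : deriv (uDefect f) 0 = 0 := by
  have hh := (((differentiableOn_dslope (hs.mem_nhds h0)).2 hf).differentiableAt
    (hs.mem_nhds h0)).hasDerivAt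
  have hf' := ((hf.deriv hs).differentiableAt (hs.mem_nhds h0)).hasDerivAt
  have hh0 : dslope f 0 0 ^ 2 ≠ 0 := by rw [dslope_same]; exact pow_ne_zero 2 hf1
  rw [show uDefect f = fun z => deriv f z / dslope f 0 z ^ 2 - 1 from rfl,
    ((hf'.fun_div (hh.fun_pow 2) hh0).sub_const 1).deriv,
    deriv_deriv_eq_two_mul_deriv_dslope hs h0 hf, dslope_same]
  field_simp
  ring

theorem mul_deriv_uDefect (hs : IsOpen s) (hf : DifferentiableOn ℂ f s) (hf0 : f 0 = 0)
    {z : ℂ} (hz : z ∈ s) (hz0 : z ≠ 0) (hfz : f z ≠ 0) (hf'z : deriv f z ≠ 0) :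
    z * deriv (uDefect f) z = (uDefect f z + 1) *
      (1 + z * deriv (deriv f) z / deriv f z + 1 - 2 * (z * deriv f z / f z)) := by
  have hhd : DifferentiableAt ℂ (dslope f 0) z :=
    (differentiableAt_dslope_of_ne hz0).2 (hf.differentiableAt (hs.mem_nhds hz))
  have hf'h := deriv_eq_dslope_add_sub_mul_deriv_dslope hhd
  have hf'' := ((hf.deriv hs).differentiableAt (hs.mem_nhds hz)).hasDerivAt
  have hhz := dslope_zero_ne_zero hf0 hfz
  rw [show uDefect f = fun z => deriv f z / dslope f 0 z ^ 2 - 1 from rfl,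
    ((hf''.fun_div (hhd.hasDerivAt.fun_pow 2) (pow_ne_zero 2 hhz)).sub_const 1).deriv,
    ← mul_dslope_zero_of_apply_zero hf0 z, Nat.cast_ofNat, Nat.add_one_sub_one, pow_one,
    sub_add_cancel]
  field_simp
  linear_combination 2 * deriv f z * hf'h

end uDefect

theorem half_le_re_div_add_one {W : ℂ} (hW : 1 ≤ ‖W‖) (hW1 : W + 1 ≠ 0) :
    1 / 2 ≤ (W / (W + 1)).re := by
  have hpos : 0 < normSq (W + 1) := normSq_pos.2 hW1
  have hW2 : 1 ≤ normSq W := by rw [← Complex.sq_norm]; nlinarith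
  rw [normSq_apply] at hW2
  rw [div_re, ← add_div, le_div_iff₀ hpos, normSq_apply]
  simp only [add_re, add_im, one_re, one_im, add_zero]
  nlinarith

theorem re_one_sub_mul_add_mul_nonpos {α c : ℝ} {P B W : ℂ} (hα : α ≤ -1) (hc : 2 ≤ c)
    (hW : 1 ≤ ‖W‖) (hW1 : W + 1 ≠ 0) (hP : 0 ≤ P.re) (hB : c * W = (W + 1) * (B + 1 - 2 * P)) :
    ((1 - (α : ℂ)) * P + α * B).re ≤ 0 := by
  have hB' : B = c * (W / (W + 1)) - 1 + 2 * P := by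
    field_simp
    linear_combination -hB
  have hre := half_le_re_div_add_one hW hW1
  rw [hB']
  simp only [add_re, sub_re, sub_im, mul_re, ofReal_re, ofReal_im, one_re, one_im, re_ofNat,
    im_ofNat, zero_mul, sub_zero]
  nlinarith [mul_le_mul_of_nonpos_left hre (by nlinarith : α * c ≤ 0),
    mul_nonneg (by linarith : 0 ≤ -1 - α) hP,
    mul_nonneg (by linarith : 0 ≤ -α) (by linarith : 0 ≤ c - 2)]

theorem stmt_13 (α : ℝ) (hα : α ≤ -1) (f : ℂ → ℂ)
    (hf : AnalyticOn ℂ f (ball 0 1))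
    (hf0 : f 0 = 0) (hf1 : deriv f 0 = 1)
    (hne : ∀ z ∈ ball (0:ℂ) 1, z ≠ 0 → f z ≠ 0 ∧ deriv f z ≠ 0)
    (hMα : ∀ z ∈ ball (0:ℂ) 1, z ≠ 0 →
      0 < ((1 - (α:ℂ)) * (z * deriv f z / f z)
        + (α:ℂ) * (1 + z * deriv (deriv f) z / deriv f z)).re)
    (hstar : ∀ z ∈ ball (0:ℂ) 1, z ≠ 0 → 0 < (z * deriv f z / f z).re) :
    ∀ z ∈ ball (0:ℂ) 1, z ≠ 0 → ‖(z / f z) ^ 2 * deriv f z - 1‖ < 1 := by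
  have h0 : (0 : ℂ) ∈ ball (0 : ℂ) 1 := mem_ball_self one_pos
  have hfd : DifferentiableOn ℂ f (ball 0 1) := hf.differentiableOn
  have hh : ∀ z ∈ ball (0 : ℂ) 1, dslope f 0 z ≠ 0 := by
    intro z hz
    rcases eq_or_ne z 0 with rfl | hz0
    · simp [dslope_same, hf1]
    · exact dslope_zero_ne_zero hf0 (hne z hz hz0).1
  obtain ⟨V, hV, hwV⟩ := exists_eq_sq_mul_of_deriv_eq_zero isOpen_ball h0
    (differentiableOn_uDefect isOpen_ball h0 hfd hh) (uDefect_zero hf1)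
    (deriv_uDefect_zero isOpen_ball h0 hfd (by simp [hf1]))
  intro z₁ hz₁ hz₁0
  rw [← uDefect_eq hf0 hz₁0]
  by_contra! hz₁w
  obtain ⟨z₀, hz₀, hz₀0, hz₀w, c, hc, hcw⟩ :=
    exists_le_mul_deriv_eq_of_one_le_norm two_ne_zero hV hwV hz₁ hz₁w
  obtain ⟨hfz, hf'z⟩ := hne z₀ hz₀ hz₀0
  have hw1 : uDefect f z₀ + 1 ≠ 0 := by simp [uDefect_eq hf0 hz₀0, hfz, hf'z, hz₀0]
  refine (hMα z₀ hz₀ hz₀0).not_ge (re_one_sub_mul_add_mul_nonpos hα (by exact_mod_cast hc)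
    hz₀w hw1 (hstar z₀ hz₀ hz₀0).le ?_)
  rw [← hcw]
  exact mul_deriv_uDefect isOpen_ball hfd hf0 hz₀ hz₀0 hfz hf'z
end

section
/- Let f ∈ U with a₂ = f''(0)/2 ≠ 0, and define g(z) = (z/f(z) − 1)/(−a₂). Then |z g'(z)/g(z) − 1| < 1 for all 0 < |z| < |a₂|/2; in particular g is starlike in the disk |z| < |a₂|/2. -/
/-!
Write `z / f z = 1 - z H(z)` with `H` holomorphic on the unit disc and `H 0 = a₂`. Then
`(z / f z)² f'(z) - 1 = z² H'(z)`, so the Schwarz lemma at a double zero gives `‖H'‖ ≤ 1`, hence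
`‖H z - a₂‖ ≤ ‖z‖`. Since `g = z H / a₂`, we get `z g'/g - 1 = z H'/H`, of modulus at most
`‖z‖ / (‖a₂‖ - ‖z‖) < 1` when `‖z‖ < ‖a₂‖ / 2`.

For this disc to lie in the unit disc we need `‖a₂‖ ≤ 2`. Otherwise
`z ↦ (1 - z (H z - a₂)) / a₂` is a contraction of the closed disc of radius `2 / ‖a₂‖ < 1`,
and its fixed point is a zero of `1 - z H z`, which is the nonvanishing function `z / f z`.
-/

open Metric Set Filter Topology

theorem dslope_smul_self_zero {𝕜 E : Type*} [NontriviallyNormedField 𝕜] [NormedAddCommGroup E]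
    [NormedSpace 𝕜 E] {φ : 𝕜 → E} (hφ : DifferentiableAt 𝕜 φ 0) :
    dslope (fun z => z • φ z) 0 = φ := by
  ext z
  rcases eq_or_ne z 0 with rfl | hz
  · simpa using ((hasDerivAt_id' 0).fun_smul hφ.hasDerivAt).deriv
  · simpa using dslope_sub_smul_of_ne φ hz

theorem Complex.norm_le_one_of_mapsTo_sq_smul {E : Type*} [NormedAddCommGroup E]
    [NormedSpace ℂ E] {F : ℂ → E} (hF : DifferentiableOn ℂ F (ball 0 1))
    (h : MapsTo (fun z => z ^ 2 • F z) (ball 0 1) (closedBall 0 1)) {z : ℂ}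
    (hz : z ∈ ball (0 : ℂ) 1) : ‖F z‖ ≤ 1 := by
  have hR : DifferentiableOn ℂ (fun z => z • F z) (ball 0 1) := differentiableOn_id.smul hF
  have hdslope₁ : dslope (fun z => z • z • F z) 0 = fun z => z • F z :=
    dslope_smul_self_zero (hR.differentiableAt (ball_mem_nhds _ one_pos))
  have hdslope₂ : dslope (fun z => z • F z) 0 = F :=
    dslope_smul_self_zero (hF.differentiableAt (ball_mem_nhds _ one_pos))
  have hmaps : MapsTo (fun z => z • F z) (ball 0 1) (closedBall 0 1) := fun w hw => by
    simpa [hdslope₁] using Complex.norm_dslope_le_div_of_mapsTo_ball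
      (f := fun z => z • z • F z) (differentiableOn_id.smul hR)
      (by simpa [pow_two, mul_smul] using h) hw
  simpa [hdslope₂] using
    Complex.norm_dslope_le_div_of_mapsTo_ball hR (by simpa using hmaps) hz

theorem iteratedDeriv_two_mul_self_zero {𝕜 : Type*} [NontriviallyNormedField 𝕜]
    [CompleteSpace 𝕜] {u : 𝕜 → 𝕜} (hu : AnalyticAt 𝕜 u 0) :
    iteratedDeriv 2 (fun z => z * u z) 0 = 2 * deriv u 0 := by
  have hderiv : deriv (fun z => z * u z) =ᶠ[𝓝 0] fun z => u z + z * deriv u z :=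
    hu.eventually_analyticAt.mono fun z hz => by
      simpa using ((hasDerivAt_id' z).fun_mul hz.differentiableAt.hasDerivAt).deriv
  rw [iteratedDeriv_succ, iteratedDeriv_one, hderiv.deriv_eq,
    (hu.differentiableAt.hasDerivAt.fun_add
      ((hasDerivAt_id' 0).fun_mul hu.deriv.differentiableAt.hasDerivAt)).deriv]
  ring

theorem exists_one_sub_mul_eq_zero_of_lipschitzOnWith {H : ℂ → ℂ}
    (hH : LipschitzOnWith 1 H (ball 0 1)) (h2 : 2 < ‖H 0‖) :
    ∃ y ∈ ball (0 : ℂ) 1, 1 - y * H y = 0 := by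
  set a := H 0
  have ha : 0 < ‖a‖ := by linarith
  set ρ := 2 / ‖a‖ with hρ_def
  have hρ : 0 < ρ := by positivity
  have hρ1 : ρ < 1 := (div_lt_one ha).2 h2
  have hsub : closedBall (0 : ℂ) ρ ⊆ ball 0 1 := closedBall_subset_ball hρ1
  have hHa : ∀ x ∈ closedBall (0 : ℂ) ρ, ‖H x - a‖ ≤ ρ := fun x hx =>
    (hH.norm_sub_le (hsub hx) (mem_ball_self one_pos)).trans (by simpa using hx)
  set T : ℂ → ℂ := fun z => (1 - z * (H z - a)) / a
  have hmaps : MapsTo T (closedBall 0 ρ) (closedBall 0 ρ) := fun x hx => by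
    have hx' : ‖x‖ ≤ ρ := mem_closedBall_zero_iff.1 hx
    rw [mem_closedBall_zero_iff, norm_div, div_le_iff₀ ha, hρ_def, div_mul_cancel₀ _ ha.ne']
    calc ‖1 - x * (H x - a)‖ ≤ 1 + ‖x‖ * ‖H x - a‖ := by
          simpa only [norm_one, norm_mul] using norm_sub_le 1 (x * (H x - a))
      _ ≤ 1 + ρ * ρ := by gcongr; exact hHa x hx
      _ ≤ 2 := by nlinarith
  have hlip : LipschitzOnWith (Real.toNNReal (2 * ρ / ‖a‖)) T (closedBall 0 ρ) := by
    refine lipschitzOnWith_iff_norm_sub_le.2 fun x hx y hy => ?_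
    have hHxy : ‖H x - H y‖ ≤ ‖x - y‖ := by simpa using hH.norm_sub_le (hsub hx) (hsub hy)
    have hTxy : T x - T y = -(x * (H x - H y) + (x - y) * (H y - a)) / a := by
      simp only [T]; field_simp; ring
    rw [Real.coe_toNNReal _ (by positivity), hTxy, norm_div, norm_neg, div_mul_eq_mul_div,
      div_le_div_iff_of_pos_right ha]
    calc ‖x * (H x - H y) + (x - y) * (H y - a)‖
        ≤ ‖x‖ * ‖H x - H y‖ + ‖x - y‖ * ‖H y - a‖ := by
          simpa only [norm_mul] using norm_add_le (x * (H x - H y)) ((x - y) * (H y - a))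
      _ ≤ ρ * ‖x - y‖ + ‖x - y‖ * ρ := by
          gcongr
          exacts [mem_closedBall_zero_iff.1 hx, hHa y hy]
      _ = 2 * ρ * ‖x - y‖ := by ring
  have hcontr : ContractingWith (Real.toNNReal (2 * ρ / ‖a‖)) (hmaps.restrict T _ _) :=
    ⟨by rw [Real.toNNReal_lt_one, div_lt_one ha]; linarith, hlip.mapsToRestrict hmaps⟩
  obtain ⟨y, hy, hTy, -⟩ := hcontr.exists_fixedPoint' isClosed_closedBall.isComplete hmaps
    (mem_closedBall_self hρ.le) (edist_ne_top _ _)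
  refine ⟨y, hsub hy, ?_⟩
  have hfix : (1 - y * (H y - a)) / a = y := hTy
  rw [div_eq_iff (norm_pos_iff.1 ha)] at hfix
  linear_combination hfix

theorem exists_eq_div_one_sub_mul {f : ℂ → ℂ} (hf : AnalyticOn ℂ f (ball 0 1)) (hf0 : f 0 = 0)
    (hf1 : deriv f 0 = 1) (hfne : ∀ z ∈ ball (0 : ℂ) 1, z ≠ 0 → f z ≠ 0) :
    ∃ H : ℂ → ℂ, DifferentiableOn ℂ H (ball 0 1) ∧ H 0 = iteratedDeriv 2 f 0 / 2 ∧
      (∀ z ∈ ball (0 : ℂ) 1, 1 - z * H z ≠ 0) ∧ f = fun z => z / (1 - z * H z) := by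
  have hball : ball (0 : ℂ) 1 ∈ 𝓝 0 := ball_mem_nhds _ one_pos
  set u := dslope f 0
  have hfu : f = fun z => z * u z := funext fun z => by
    simpa [hf0] using (sub_smul_dslope f 0 z).symm
  have hu : DifferentiableOn ℂ u (ball 0 1) :=
    (Complex.differentiableOn_dslope hball).2 hf.differentiableOn
  have hu0 : u 0 = 1 := by simp [u, hf1]
  have hune : ∀ z ∈ ball (0 : ℂ) 1, u z ≠ 0 := fun z hz huz => by
    rcases eq_or_ne z 0 with rfl | hz0
    · simp [hu0] at huz
    · exact hfne z hz hz0 (by simp [hfu, huz])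
  set p := fun z => (u z)⁻¹
  have hp : DifferentiableOn ℂ p (ball 0 1) := hu.inv hune
  have hp1 (z : ℂ) : 1 - z * -dslope p 0 z = p z := by
    have := sub_smul_dslope p 0 z
    simp only [sub_zero, smul_eq_mul, p, hu0, inv_one] at this
    linear_combination this
  refine ⟨fun z => -dslope p 0 z, ((Complex.differentiableOn_dslope hball).2 hp).neg, ?_,
    fun z hz => by rw [hp1]; exact inv_ne_zero (hune z hz),
    by simp_rw [hp1, p, div_inv_eq_mul, hfu]⟩
  have hu0' := hu.analyticAt hball
  show -dslope p 0 0 = _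
  rw [hfu, iteratedDeriv_two_mul_self_zero hu0', dslope_same,
    (hu0'.differentiableAt.hasDerivAt.fun_inv (by simp [hu0])).deriv]
  simp [hu0]

theorem sq_div_mul_deriv_sub_one_eq {H : ℂ → ℂ} {z : ℂ} (hH : DifferentiableAt ℂ H z)
    (hz : z ≠ 0) (hp : 1 - z * H z ≠ 0) :
    (z / (z / (1 - z * H z))) ^ 2 * deriv (fun w => w / (1 - w * H w)) z - 1 =
      z ^ 2 * deriv H z := by
  rw [((hasDerivAt_id' z).fun_div
    (((hasDerivAt_id' z).fun_mul hH.hasDerivAt).const_sub 1) hp).deriv, div_div_cancel₀ hz]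
  field_simp
  ring

theorem mul_deriv_div_sub_one_eq {H g : ℂ → ℂ} {a z : ℂ} (hH : DifferentiableAt ℂ H z)
    (hz : z ≠ 0) (hHz : H z ≠ 0) (ha : a ≠ 0)
    (hg : g = fun w => (w / (w / (1 - w * H w)) - 1) / -a) :
    z * deriv g z / g z - 1 = z * deriv H z / H z := by
  have hg' : g =ᶠ[𝓝 z] fun w => w * H w / a := by
    filter_upwards [isOpen_ne.mem_nhds hz] with w hw
    simp only [hg, div_div_cancel₀ hw]
    field_simp
    ring
  rw [hg'.deriv_eq, hg'.eq_of_nhds,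
    ((hasDerivAt_id' z).fun_mul hH.hasDerivAt).div_const a |>.deriv]
  field_simp
  ring

theorem stmt_16 (f : ℂ → ℂ)
    (hf : AnalyticOn ℂ f (ball 0 1))
    (hf0 : f 0 = 0) (hf1 : deriv f 0 = 1)
    (hU : ∀ z ∈ ball (0:ℂ) 1, z ≠ 0 → ‖(z / f z) ^ 2 * deriv f z - 1‖ < 1)
    (a₂ : ℂ) (ha₂ : a₂ = iteratedDeriv 2 f 0 / 2) (ha₂0 : a₂ ≠ 0)
    (g : ℂ → ℂ) (hg : g = fun z => (z / f z - 1) / (-a₂)) :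
    ∀ z : ℂ, 0 < ‖z‖ → ‖z‖ < ‖a₂‖ / 2 →
      ‖z * deriv g z / g z - 1‖ < 1 := by
  intro z hz0 hza
  have hfne : ∀ w ∈ ball (0 : ℂ) 1, w ≠ 0 → f w ≠ 0 := fun w hw hw0 hfw => by
    simpa [hfw] using hU w hw hw0
  obtain ⟨H, hHd, hH0, hp, rfl⟩ := exists_eq_div_one_sub_mul hf hf0 hf1 hfne
  rw [← ha₂] at hH0
  have hHd' (w : ℂ) (hw : w ∈ ball (0 : ℂ) 1) : DifferentiableAt ℂ H w :=
    hHd.differentiableAt (isOpen_ball.mem_nhds hw)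
  have hH' : ∀ w ∈ ball (0 : ℂ) 1, ‖deriv H w‖ ≤ 1 := fun w hw =>
    Complex.norm_le_one_of_mapsTo_sq_smul (hHd.deriv isOpen_ball) (fun v hv => by
      rcases eq_or_ne v 0 with rfl | hv0
      · simp
      · simpa [← sq_div_mul_deriv_sub_one_eq (hHd' v hv) hv0 (hp v hv)] using
          (hU v hv hv0).le) hw
  have hLip : LipschitzOnWith 1 H (ball 0 1) :=
    (convex_ball 0 1).lipschitzOnWith_of_nnnorm_deriv_le hHd'
      fun w hw => by simpa [← NNReal.coe_le_coe] using hH' w hw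
  have ha₂le : ‖a₂‖ ≤ 2 := by
    by_contra! h
    obtain ⟨y, hy, hy0⟩ := exists_one_sub_mul_eq_zero_of_lipschitzOnWith hLip (hH0 ▸ h)
    exact hp y hy hy0
  have hz : z ∈ ball (0 : ℂ) 1 := mem_ball_zero_iff.2 (by linarith)
  have hHz : ‖H z - a₂‖ ≤ ‖z‖ := by
    simpa [hH0] using hLip.norm_sub_le hz (mem_ball_self one_pos)
  have hHz' : ‖z‖ < ‖H z‖ := by
    linarith [norm_sub_norm_le a₂ (H z), norm_sub_rev a₂ (H z)]
  rw [mul_deriv_div_sub_one_eq (hHd' z hz) (norm_pos_iff.1 hz0)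
    (norm_pos_iff.1 (hz0.trans hHz')) ha₂0 hg, norm_div, norm_mul,
    div_lt_one (hz0.trans hHz')]
  nlinarith [hH' z hz]
end

section
/- Let f ∈ U with a₂ = f''(0)/2 satisfying 0 < |a₂| ≤ 1, and define g(z) = (z/f(z) − 1)/(−a₂). Then g belongs to the class U on the disk |z| < |a₂|/2, i.e. |(z/g(z))² g'(z) − 1| < 1 for all |z| < |a₂|/2. -/
/-!
Write `z / f z = 1 - z w(z)`. Then `(z / f)² f' - 1 = z² w'`, so the class-`U` condition and the
Schwarz lemma, applied twice, give `‖w'‖ ≤ 1`; as `w 0 = a₂`, the mean value inequality yields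
`w = a₂ + z φ` with `‖φ‖ ≤ 1`. Hence `g = z + z² φ / a₂` and
`(z / g)² g' - 1 = z² (a₂ φ' - φ²) / (a₂ + z φ)²`, which the Schwarz–Pick bound
`‖φ'‖ (1 - ‖z‖²) ≤ 1 - ‖φ‖²` keeps below `1` in norm when `‖z‖ < ‖a₂‖ / 2`.
-/

open Metric Set Complex ComplexConjugate Filter Topology

noncomputable def mobius (a ζ : ℂ) : ℂ := (ζ + a) / (1 + conj a * ζ)

lemma normSq_one_add_conj_mul_sub_normSq_add (a ζ : ℂ) :
    normSq (1 + conj a * ζ) - normSq (ζ + a) = (1 - normSq a) * (1 - normSq ζ) := by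
  simp only [normSq_apply, add_re, add_im, mul_re, mul_im, conj_re, conj_im, one_re, one_im]
  ring

lemma normSq_add_lt_normSq_one_add_conj_mul {a ζ : ℂ} (ha : ‖a‖ < 1) (hζ : ‖ζ‖ < 1) :
    normSq (ζ + a) < normSq (1 + conj a * ζ) := by
  have h := normSq_one_add_conj_mul_sub_normSq_add a ζ
  simp only [normSq_eq_norm_sq] at h ⊢
  nlinarith [mul_pos (by nlinarith [norm_nonneg a] : (0 : ℝ) < 1 - ‖a‖ ^ 2)
    (by nlinarith [norm_nonneg ζ] : (0 : ℝ) < 1 - ‖ζ‖ ^ 2)]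

lemma one_add_conj_mul_ne_zero {a ζ : ℂ} (ha : ‖a‖ < 1) (hζ : ‖ζ‖ < 1) :
    1 + conj a * ζ ≠ 0 := by
  rw [← normSq_pos]
  exact (normSq_nonneg _).trans_lt (normSq_add_lt_normSq_one_add_conj_mul ha hζ)

lemma mapsTo_mobius_ball {a : ℂ} (ha : ‖a‖ < 1) : MapsTo (mobius a) (ball 0 1) (ball 0 1) := by
  intro ζ hζ
  rw [mem_ball_zero_iff] at hζ ⊢
  rw [← sq_lt_one_iff₀ (norm_nonneg _), ← normSq_eq_norm_sq, mobius, map_div₀,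
    div_lt_one (normSq_pos.2 (one_add_conj_mul_ne_zero ha hζ))]
  exact normSq_add_lt_normSq_one_add_conj_mul ha hζ

lemma hasDerivAt_mobius {a ζ : ℂ} (h : 1 + conj a * ζ ≠ 0) :
    HasDerivAt (mobius a) ((1 - normSq a) / (1 + conj a * ζ) ^ 2) ζ := by
  have := ((hasDerivAt_id' ζ).add_const a).fun_div
    (((hasDerivAt_id' ζ).const_mul (conj a)).const_add 1) h
  refine this.congr_deriv ?_
  rw [normSq_eq_conj_mul_self]
  ring

lemma differentiableOn_mobius {a : ℂ} (ha : ‖a‖ < 1) :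
    DifferentiableOn ℂ (mobius a) (ball 0 1) := fun _ hζ =>
  (hasDerivAt_mobius (one_add_conj_mul_ne_zero ha (mem_ball_zero_iff.1 hζ)))
    |>.differentiableAt.differentiableWithinAt

lemma mobius_zero (a : ℂ) : mobius a 0 = a := by simp [mobius]

lemma mobius_neg_self (a : ℂ) : mobius (-a) a = 0 := by simp [mobius]

lemma hasDerivAt_mobius_zero (a : ℂ) : HasDerivAt (mobius a) (1 - normSq a) 0 := by
  simpa using hasDerivAt_mobius (a := a) (ζ := 0) (by simp)

lemma hasDerivAt_mobius_neg_self {a : ℂ} (ha : ‖a‖ < 1) :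
    HasDerivAt (mobius (-a)) (1 - normSq a)⁻¹ a := by
  have h : 1 + conj (-a) * a = 1 - normSq a := by
    rw [map_neg, neg_mul, normSq_eq_conj_mul_self, sub_eq_add_neg]
  have hne : (1 - normSq a : ℂ) ≠ 0 := h ▸ one_add_conj_mul_ne_zero (by simpa) ha
  convert hasDerivAt_mobius (h ▸ hne) using 1
  rw [h, normSq_neg, sq, div_mul_cancel_left₀ hne]

/-- Schwarz–Pick: the Schwarz lemma for `mobius (-φ z) ∘ φ ∘ mobius z`, which fixes `0`. -/
theorem norm_deriv_mul_le_of_mapsTo_ball {φ : ℂ → ℂ} (hd : DifferentiableOn ℂ φ (ball 0 1))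
    (hm : MapsTo φ (ball 0 1) (ball 0 1)) {z : ℂ} (hz : z ∈ ball 0 1) :
    ‖deriv φ z‖ * (1 - ‖z‖ ^ 2) ≤ 1 - ‖φ z‖ ^ 2 := by
  have hz' : ‖z‖ < 1 := mem_ball_zero_iff.1 hz
  have hb : ‖φ z‖ < 1 := mem_ball_zero_iff.1 (hm hz)
  have hb' : ‖-φ z‖ < 1 := by rwa [norm_neg]
  set F := mobius (-φ z) ∘ φ ∘ mobius z
  have hFd : DifferentiableOn ℂ F (ball 0 1) :=
    (differentiableOn_mobius hb').comp
      (hd.comp (differentiableOn_mobius hz') (mapsTo_mobius_ball hz'))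
      (hm.comp (mapsTo_mobius_ball hz'))
  have hF0 : F 0 = 0 := by simp only [F, Function.comp, mobius_zero, mobius_neg_self]
  have hFm : MapsTo F (ball 0 1) (closedBall (F 0) 1) := by
    rw [hF0]
    exact ((mapsTo_mobius_ball hb').comp (hm.comp (mapsTo_mobius_ball hz'))).mono_right
      ball_subset_closedBall
  have hφ : HasDerivAt φ (deriv φ z) (mobius z 0) := by
    rw [mobius_zero]
    exact (hd.differentiableAt (isOpen_ball.mem_nhds hz)).hasDerivAt
  have hφM : HasDerivAt (φ ∘ mobius z) (deriv φ z * (1 - normSq z)) 0 :=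
    hφ.comp 0 (hasDerivAt_mobius_zero z)
  have hM : HasDerivAt (mobius (-φ z)) (1 - normSq (φ z))⁻¹ ((φ ∘ mobius z) 0) := by
    rw [Function.comp_apply, mobius_zero]
    exact hasDerivAt_mobius_neg_self hb
  have key := norm_deriv_le_one_of_mapsTo_ball hFd hFm one_pos
  rw [(hM.comp 0 hφM).deriv] at key
  have hnorm : ∀ w : ℂ, ‖w‖ < 1 → ‖(1 - normSq w : ℂ)‖ = 1 - ‖w‖ ^ 2 := fun w hw => by
    rw [normSq_eq_norm_sq, ← ofReal_one, ← ofReal_sub, norm_real, Real.norm_of_nonneg]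
    nlinarith [norm_nonneg w]
  rw [norm_mul, norm_mul, norm_inv, hnorm _ hb, hnorm _ hz', inv_mul_le_iff₀] at key
  · linarith
  · nlinarith [norm_nonneg (φ z)]

theorem norm_deriv_mul_le_of_norm_le_one {φ : ℂ → ℂ} (hd : DifferentiableOn ℂ φ (ball 0 1))
    (hm : ∀ ζ ∈ ball (0 : ℂ) 1, ‖φ ζ‖ ≤ 1) {z : ℂ} (hz : z ∈ ball 0 1) :
    ‖deriv φ z‖ * (1 - ‖z‖ ^ 2) ≤ 1 - ‖φ z‖ ^ 2 := by
  have hscaled : ∀ r ∈ Ioo (0 : ℝ) 1,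
      r * (‖deriv φ z‖ * (1 - ‖z‖ ^ 2)) ≤ 1 - r ^ 2 * ‖φ z‖ ^ 2 := by
    rintro r ⟨hr0, hr1⟩
    have hrφ : MapsTo (fun ζ => (r : ℂ) * φ ζ) (ball 0 1) (ball 0 1) := fun ζ hζ => by
      rw [mem_ball_zero_iff, norm_mul, norm_real, Real.norm_of_nonneg hr0.le]
      nlinarith [hm ζ hζ]
    have := norm_deriv_mul_le_of_mapsTo_ball (hd.const_mul (r : ℂ)) hrφ hz
    rwa [deriv_const_mul _ (hd.differentiableAt (isOpen_ball.mem_nhds hz)), norm_mul, norm_mul,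
      norm_real, Real.norm_of_nonneg hr0.le, mul_pow, mul_assoc] at this
  have hlim : ∀ c : ℝ → ℝ, Continuous c → Tendsto c (𝓝[<] 1) (𝓝 (c 1)) := fun c hc =>
    hc.continuousAt.tendsto.mono_left nhdsWithin_le_nhds
  simpa using le_of_tendsto_of_tendsto (hlim _ (by fun_prop)) (hlim _ (by fun_prop))
    (eventually_of_mem (Ioo_mem_nhdsLT one_pos) hscaled)

lemma dslope_id_mul_zero {u : ℂ → ℂ} (hu : DifferentiableAt ℂ u 0) :
    dslope (fun z => z * u z) 0 = u := by
  funext z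
  rcases eq_or_ne z 0 with rfl | hz
  · rw [dslope_same, ((hasDerivAt_id' 0).fun_mul hu.hasDerivAt).deriv]
    simp
  · rw [dslope_of_ne _ hz, slope_def_field]
    field_simp
    ring

lemma norm_le_div_of_norm_id_mul_le {u : ℂ → ℂ} {R M : ℝ}
    (hu : DifferentiableOn ℂ u (ball 0 R)) (h : ∀ z ∈ ball 0 R, ‖z * u z‖ ≤ M)
    {z : ℂ} (hz : z ∈ ball 0 R) : ‖u z‖ ≤ M / R := by
  have h0 : (0 : ℂ) ∈ ball 0 R := mem_ball_self (pos_of_mem_ball hz)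
  have hv : DifferentiableOn ℂ (fun z => z * u z) (ball 0 R) :=
    differentiableOn_id.mul hu
  have hmaps : MapsTo (fun z => z * u z) (ball 0 R) (closedBall (0 * u 0) M) := fun ζ hζ => by
    simpa using h ζ hζ
  rw [← dslope_id_mul_zero (hu.differentiableAt (isOpen_ball.mem_nhds h0))]
  exact Complex.norm_dslope_le_div_of_mapsTo_ball hv hmaps hz

lemma norm_dslope_le_of_norm_deriv_le {E : Type*} [NormedAddCommGroup E] [NormedSpace ℂ E]
    {w : ℂ → E} {c : ℂ} {R C : ℝ}
    (hw : DifferentiableOn ℂ w (ball c R)) (h : ∀ z ∈ ball c R, ‖deriv w z‖ ≤ C)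
    {z : ℂ} (hz : z ∈ ball c R) : ‖dslope w c z‖ ≤ C := by
  rcases eq_or_ne z c with rfl | hzc
  · rw [dslope_same]
    exact h z hz
  · have hmvt := (convex_ball c R).norm_image_sub_le_of_norm_deriv_le
      (fun x hx => hw.differentiableAt (isOpen_ball.mem_nhds hx)) h
      (mem_ball_self (pos_of_mem_ball hz)) hz
    rw [dslope_of_ne _ hzc, slope_def_module, norm_smul, norm_inv, inv_mul_le_iff₀
      (norm_pos_iff.2 (sub_ne_zero.2 hzc)), mul_comm]
    exact hmvt

lemma iteratedDeriv_two_id_mul_zero {q : ℂ → ℂ} (hq : AnalyticAt ℂ q 0) :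
    iteratedDeriv 2 (fun z => z * q z) 0 = 2 * deriv q 0 := by
  have hderiv : deriv (fun z => z * q z) =ᶠ[𝓝 0] fun z => q z + z * deriv q z := by
    filter_upwards [hq.eventually_analyticAt] with z hz
    rw [((hasDerivAt_id' z).fun_mul hz.differentiableAt.hasDerivAt).deriv]
    ring
  rw [iteratedDeriv_succ, iteratedDeriv_one, hderiv.deriv_eq,
    (hq.differentiableAt.hasDerivAt.fun_add
      ((hasDerivAt_id' 0).fun_mul hq.deriv.differentiableAt.hasDerivAt)).deriv]
  ring

lemma sq_div_id_mul_mul_deriv {q : ℂ → ℂ} {z : ℂ} (hq : DifferentiableAt ℂ q z)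
    (hqz : q z ≠ 0) (hz : z ≠ 0) :
    (z / (z * q z)) ^ 2 * deriv (fun ζ => ζ * q ζ) z =
      (q z)⁻¹ - z * deriv (fun ζ => (q ζ)⁻¹) z := by
  rw [((hasDerivAt_id' z).fun_mul hq.hasDerivAt).deriv, (hq.hasDerivAt.fun_inv hqz).deriv]
  field_simp
  ring

lemma one_sub_id_mul_sub_mul_deriv {w : ℂ → ℂ} {z : ℂ} (hw : DifferentiableAt ℂ w z) :
    (1 - z * w z) - z * deriv (fun ζ => 1 - ζ * w ζ) z - 1 = z * (z * deriv w z) := by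
  rw [((hasDerivAt_id' z).fun_mul hw.hasDerivAt).const_sub 1 |>.deriv]
  ring

theorem exists_forall_eq_one_sub_mul_sub_sq_mul {p : ℂ → ℂ} {a : ℂ}
    (hp : DifferentiableOn ℂ p (ball 0 1)) (hp0 : p 0 = 1) (hp' : deriv p 0 = -a)
    (hU : ∀ z ∈ ball (0 : ℂ) 1, z ≠ 0 → ‖p z - z * deriv p z - 1‖ < 1) :
    ∃ φ : ℂ → ℂ, DifferentiableOn ℂ φ (ball 0 1) ∧ (∀ z ∈ ball (0 : ℂ) 1, ‖φ z‖ ≤ 1) ∧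
      ∀ z, p z = 1 - a * z - z ^ 2 * φ z := by
  have h0 : ball (0 : ℂ) 1 ∈ 𝓝 0 := ball_mem_nhds 0 one_pos
  set w := -dslope p 0
  have hw : DifferentiableOn ℂ w (ball 0 1) := ((differentiableOn_dslope h0).2 hp).neg
  have hw0 : w 0 = a := by simp [w, hp']
  have hpw : p = fun z => 1 - z * w z := funext fun z => by
    have := sub_smul_dslope p 0 z
    simp only [sub_zero, smul_eq_mul, hp0] at this
    simp [w, this]
  have hw'z : ∀ z ∈ ball (0 : ℂ) 1, ‖z * (z * deriv w z)‖ ≤ 1 := fun z hz => by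
    rcases eq_or_ne z 0 with rfl | hz0
    · simp
    · have := hU z hz hz0
      simp only [hpw] at this
      rw [one_sub_id_mul_sub_mul_deriv (hw.differentiableAt (isOpen_ball.mem_nhds hz))] at this
      exact this.le
  have hw'd : DifferentiableOn ℂ (deriv w) (ball 0 1) := hw.deriv isOpen_ball
  have hw' : ∀ z ∈ ball (0 : ℂ) 1, ‖deriv w z‖ ≤ 1 := fun z hz => by
    simpa using norm_le_div_of_norm_id_mul_le hw'd (fun ζ hζ => by
      simpa using norm_le_div_of_norm_id_mul_le (differentiableOn_id.mul hw'd) hw'z hζ) hz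
  refine ⟨dslope w 0, (differentiableOn_dslope h0).2 hw,
    fun z hz => norm_dslope_le_of_norm_deriv_le hw hw' hz, fun z => ?_⟩
  have := sub_smul_dslope w 0 z
  rw [sub_zero, smul_eq_mul, hw0] at this
  simp only [hpw]
  linear_combination z * this

theorem exists_forall_div_eq_one_sub_mul_sub_sq_mul {f : ℂ → ℂ}
    (hf : DifferentiableOn ℂ f (ball 0 1)) (hf0 : f 0 = 0) (hf1 : deriv f 0 = 1)
    (hU : ∀ z ∈ ball (0 : ℂ) 1, z ≠ 0 → ‖(z / f z) ^ 2 * deriv f z - 1‖ < 1) :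
    ∃ φ : ℂ → ℂ, DifferentiableOn ℂ φ (ball 0 1) ∧ (∀ z ∈ ball (0 : ℂ) 1, ‖φ z‖ ≤ 1) ∧
      ∀ z ≠ 0, z / f z = 1 - iteratedDeriv 2 f 0 / 2 * z - z ^ 2 * φ z := by
  have h0 : ball (0 : ℂ) 1 ∈ 𝓝 0 := ball_mem_nhds 0 one_pos
  set q := dslope f 0
  have hfq : f = fun z => z * q z := funext fun z => by
    simpa [hf0] using (sub_smul_dslope f 0 z).symm
  have hq : DifferentiableOn ℂ q (ball 0 1) := (differentiableOn_dslope h0).2 hf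
  have hq0 : q 0 = 1 := by simp [q, hf1]
  have hqne : ∀ z ∈ ball (0 : ℂ) 1, q z ≠ 0 := fun z hz hqz => by
    rcases eq_or_ne z 0 with rfl | hz0
    · exact one_ne_zero (hq0 ▸ hqz)
    · have := hU z hz hz0
      simp [hfq, hqz] at this
  have hqa : AnalyticAt ℂ q 0 := hq.analyticAt h0
  obtain ⟨φ, hφ, hφ1, hp⟩ := exists_forall_eq_one_sub_mul_sub_sq_mul (p := fun z => (q z)⁻¹)
    (a := iteratedDeriv 2 f 0 / 2) (hq.inv hqne) (by simp [hq0])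
    (by
      rw [(hqa.differentiableAt.hasDerivAt.fun_inv (hqne 0 (mem_of_mem_nhds h0))).deriv, hfq,
        iteratedDeriv_two_id_mul_zero hqa, hq0]
      ring)
    (fun z hz hz0 => by
      rw [← sq_div_id_mul_mul_deriv (hq.differentiableAt (isOpen_ball.mem_nhds hz))
        (hqne z hz) hz0]
      simpa only [hfq] using hU z hz hz0)
  refine ⟨φ, hφ, hφ1, fun z hz0 => ?_⟩
  rw [← hp z, hfq, div_mul_cancel_left₀ hz0]

lemma sq_mul_add_lt_sq_sub_mul {a s u b : ℝ} (ha : a ≤ 1) (hs0 : 0 < s) (hs : s < a / 2)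
    (hu1 : u ≤ 1) (hb : b * (1 - s ^ 2) ≤ 1 - u ^ 2) :
    s ^ 2 * (a * b + u ^ 2) < (a - s * u) ^ 2 := by
  have hsb : s ^ 2 * b ≤ 2 * s * (1 - u) := by
    have h1s : 0 < 1 - s ^ 2 := by nlinarith
    refine le_of_mul_le_mul_right ?_ h1s
    nlinarith [mul_nonneg (mul_nonneg hs0.le (sub_nonneg.2 hu1))
      (show 0 ≤ 2 * (1 - s ^ 2) - s * (1 + u) by nlinarith)]
  nlinarith

lemma norm_sub_mul_le_norm_add_mul (a z A : ℂ) : ‖a‖ - ‖z‖ * ‖A‖ ≤ ‖a + z * A‖ := by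
  simpa [norm_mul] using norm_sub_norm_le a (-(z * A))

lemma norm_sq_mul_sub_div_sq_lt_one {a A B z : ℂ} (ha : ‖a‖ ≤ 1) (hA : ‖A‖ ≤ 1)
    (hB : ‖B‖ * (1 - ‖z‖ ^ 2) ≤ 1 - ‖A‖ ^ 2) (hz0 : z ≠ 0) (hz : ‖z‖ < ‖a‖ / 2) :
    ‖z ^ 2 * (a * B - A ^ 2) / (a + z * A) ^ 2‖ < 1 := by
  have hzA : ‖z‖ * ‖A‖ ≤ ‖z‖ := mul_le_of_le_one_right (norm_nonneg z) hA
  have hY : 0 < ‖a‖ - ‖z‖ * ‖A‖ := by linarith [norm_nonneg z]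
  have hYle := norm_sub_mul_le_norm_add_mul a z A
  have hnum : ‖a * B - A ^ 2‖ ≤ ‖a‖ * ‖B‖ + ‖A‖ ^ 2 :=
    (norm_sub_le _ _).trans_eq (by rw [norm_mul, norm_pow])
  rw [norm_div, norm_mul, norm_pow, norm_pow, div_lt_one (pow_pos (hY.trans_le hYle) 2)]
  calc ‖z‖ ^ 2 * ‖a * B - A ^ 2‖ ≤ ‖z‖ ^ 2 * (‖a‖ * ‖B‖ + ‖A‖ ^ 2) := by gcongr
    _ < (‖a‖ - ‖z‖ * ‖A‖) ^ 2 :=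
      sq_mul_add_lt_sq_sub_mul ha (norm_pos_iff.2 hz0) hz hA hB
    _ ≤ ‖a + z * A‖ ^ 2 := by gcongr

theorem norm_sq_div_mul_deriv_sub_one_lt_one {a : ℂ} (ha : ‖a‖ ≤ 1) {φ : ℂ → ℂ}
    (hd : DifferentiableOn ℂ φ (ball 0 1))
    (hφ : ∀ ζ ∈ ball (0 : ℂ) 1, ‖φ ζ‖ ≤ 1) {z : ℂ} (hz0 : z ≠ 0) (hz : ‖z‖ < ‖a‖ / 2) :
    ‖(z / (z + z ^ 2 * φ z / a)) ^ 2 * deriv (fun ζ => ζ + ζ ^ 2 * φ ζ / a) z - 1‖ < 1 := by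
  have hzD : z ∈ ball (0 : ℂ) 1 := mem_ball_zero_iff.2 (by linarith)
  have ha0 : a ≠ 0 := norm_pos_iff.1 (by linarith [norm_pos_iff.2 hz0])
  have hY : a + z * φ z ≠ 0 := norm_pos_iff.1 <|
    (show 0 < ‖a‖ - ‖z‖ * ‖φ z‖ by nlinarith [norm_nonneg z, hφ z hzD]).trans_le
      (norm_sub_mul_le_norm_add_mul a z (φ z))
  have hG : HasDerivAt (fun ζ => ζ + ζ ^ 2 * φ ζ / a)
      (1 + (2 * z * φ z + z ^ 2 * deriv φ z) / a) z := by
    have hφ' := (hd.differentiableAt (isOpen_ball.mem_nhds hzD)).hasDerivAt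
    refine ((hasDerivAt_id' z).fun_add
      (((hasDerivAt_pow 2 z).fun_mul hφ').div_const a)).congr_deriv ?_
    norm_num
  rw [hG.deriv, show z + z ^ 2 * φ z / a = z * (a + z * φ z) / a by field_simp,
    show (z / (z * (a + z * φ z) / a)) ^ 2 * (1 + (2 * z * φ z + z ^ 2 * deriv φ z) / a) - 1
      = z ^ 2 * (a * deriv φ z - φ z ^ 2) / (a + z * φ z) ^ 2 by field_simp; ring]
  exact norm_sq_mul_sub_div_sq_lt_one ha (hφ z hzD) (norm_deriv_mul_le_of_norm_le_one hd hφ hzD)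
    hz0 hz

theorem stmt_18_general (f : ℂ → ℂ)
    (hf : AnalyticOn ℂ f (ball 0 1))
    (hf0 : f 0 = 0) (hf1 : deriv f 0 = 1)
    (hU : ∀ z ∈ ball (0:ℂ) 1, z ≠ 0 → ‖(z / f z) ^ 2 * deriv f z - 1‖ < 1)
    (a₂ : ℂ) (ha₂ : a₂ = iteratedDeriv 2 f 0 / 2)
    (ha₂1 : ‖a₂‖ ≤ 1)
    (g : ℂ → ℂ) (hg : g = fun z => (z / f z - 1) / (-a₂)) :
    ∀ z : ℂ, z ≠ 0 → ‖z‖ < ‖a₂‖ / 2 →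
      ‖(z / g z) ^ 2 * deriv g z - 1‖ < 1 := by
  obtain ⟨φ, hφ, hφ1, hrep⟩ :=
    exists_forall_div_eq_one_sub_mul_sub_sq_mul hf.differentiableOn hf0 hf1 hU
  rw [← ha₂] at hrep
  intro z hz0 hz
  have ha₂_ne : a₂ ≠ 0 := norm_pos_iff.1 (by linarith [norm_pos_iff.2 hz0])
  have hgz : g =ᶠ[𝓝 z] fun ζ => ζ + ζ ^ 2 * φ ζ / a₂ :=
    eventually_of_mem (isOpen_ne.mem_nhds hz0) fun ζ hζ => by
      simp only [hg, hrep ζ hζ]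
      field_simp
      ring
  rw [hgz.eq_of_nhds, hgz.deriv_eq]
  exact norm_sq_div_mul_deriv_sub_one_lt_one ha₂1 hφ hφ1 hz0 hz

theorem stmt_18 (f : ℂ → ℂ)
    (hf : AnalyticOn ℂ f (ball 0 1))
    (hf0 : f 0 = 0) (hf1 : deriv f 0 = 1)
    (hU : ∀ z ∈ ball (0:ℂ) 1, z ≠ 0 → ‖(z / f z) ^ 2 * deriv f z - 1‖ < 1)
    (a₂ : ℂ) (ha₂ : a₂ = iteratedDeriv 2 f 0 / 2)
    (ha₂0 : 0 < ‖a₂‖) (ha₂1 : ‖a₂‖ ≤ 1)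
    (g : ℂ → ℂ) (hg : g = fun z => (z / f z - 1) / (-a₂)) :
    ∀ z : ℂ, z ≠ 0 → ‖z‖ < ‖a₂‖ / 2 →
      ‖(z / g z) ^ 2 * deriv g z - 1‖ < 1 :=
  stmt_18_general f hf hf0 hf1 hU a₂ ha₂ ha₂1 g hg
end

section
/- For 0 < b ≤ 2, the function f_b defined by z/f_b(z) = 1 + bz + z², i.e. f_b(z) = z/(1 + bz + z²), belongs to the class U, and the associated function g_b(z) = z + z²/b is starlike on the disk |z| < b/2 but satisfies g_b'(−b/2) = 0, so g_b is not univalent on any larger disk centered at 0. -/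
/-!
With `p(z) = 1 + bz + z² = z / f_b(z)` one has `(z / f_b)² f_b' = p - z p' = 1 - z²`, so the
quantity defining `U` is `-z²`. The polynomial `p` has no zero in the unit disk: a real root `x`
would satisfy `1 + x² = -bx ≤ 2|x|`, forcing `|x| = 1`, and a non-real root `z` has conjugate root
`z̄ = -b - z`, so `|z|² = z z̄ = 1` by Vieta.

For `g_c(z) = z + z²/c` one has `z g_c'/g_c = 1 + z/(c + z)`, and `|z| < |c + z|` once
`2|z| < |c|`. Finally `g_c(-c/2 + t) = g_c(-c/2 - t)`, so `g_c` is not injective on any open set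
containing `-c/2`.
-/

open Metric ComplexConjugate

section QuotientByDenominator

variable {𝕜 : Type*} [NontriviallyNormedField 𝕜] {p : 𝕜 → 𝕜} {p' z : 𝕜}

theorem hasDerivAt_id_div (hp : HasDerivAt p p' z) (hpz : p z ≠ 0) :
    HasDerivAt (fun w => w / p w) ((p z - z * p') / p z ^ 2) z := by
  simpa using (hasDerivAt_id' (x := z)).fun_div hp hpz

theorem div_div_sq_mul_deriv_id_div (hp : HasDerivAt p p' z) (hpz : p z ≠ 0) (hz : z ≠ 0) :
    (z / (z / p z)) ^ 2 * deriv (fun w => w / p w) z = p z - z * p' := by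
  rw [(hasDerivAt_id_div hp hpz).deriv, div_div_cancel₀ hz]
  field_simp

end QuotientByDenominator

theorem one_add_mul_add_sq_ne_zero {b : ℝ} (hb : |b| ≤ 2) {z : ℂ} (hz : ‖z‖ < 1) :
    1 + (b : ℂ) * z + z ^ 2 ≠ 0 := by
  intro h
  have hconj : 1 + (b : ℂ) * conj z + conj z ^ 2 = 0 := by
    simpa using congrArg conj h
  rcases mul_eq_zero.1 (by linear_combination h - hconj :
      (z - conj z) * (z + conj z + b) = 0) with hreal | hsum
  · obtain ⟨x, rfl⟩ := Complex.conj_eq_iff_real.1 (sub_eq_zero.1 hreal).symm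
    have hx : 1 + b * x + x ^ 2 = 0 := by exact_mod_cast h
    rw [Complex.norm_real, Real.norm_eq_abs] at hz
    nlinarith [abs_mul_abs_self x, neg_abs_le (b * x), abs_mul b x,
      mul_le_mul_of_nonneg_right hb (abs_nonneg x)]
  · have hnorm : ((‖z‖ ^ 2 : ℝ) : ℂ) = 1 := by
      rw [Complex.ofReal_pow, ← Complex.mul_conj']
      linear_combination z * hsum - h
    have : ‖z‖ ^ 2 = 1 := by exact_mod_cast hnorm
    nlinarith [norm_nonneg z]

theorem hasDerivAt_add_sq_div (c z : ℂ) :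
    HasDerivAt (fun w => w + w ^ 2 / c) (1 + 2 * z / c) z :=
  ((hasDerivAt_id' (x := z)).fun_add ((hasDerivAt_pow 2 z).div_const c)).congr_deriv (by ring)

section AddSqDiv

variable {c : ℂ}

theorem mul_deriv_add_sq_div_div {z : ℂ} (hc : c ≠ 0) (hz : z ≠ 0) (hcz : c + z ≠ 0) :
    z * deriv (fun w => w + w ^ 2 / c) z / (z + z ^ 2 / c) = 1 + z / (c + z) := by
  rw [(hasDerivAt_add_sq_div c z).deriv]
  field_simp
  ring

theorem re_pos_of_norm_sub_one_lt_one {w : ℂ} (h : ‖w - 1‖ < 1) : 0 < w.re := by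
  have := Complex.abs_re_le_norm (w - 1)
  rw [Complex.sub_re, Complex.one_re, abs_le] at this
  linarith

theorem re_mul_deriv_add_sq_div_div_pos {z : ℂ} (hz : z ≠ 0) (h : 2 * ‖z‖ < ‖c‖) :
    0 < (z * deriv (fun w => w + w ^ 2 / c) z / (z + z ^ 2 / c)).re := by
  have hzcz : ‖z‖ < ‖c + z‖ := by
    have := norm_sub_norm_le c (-z)
    rw [norm_neg, sub_neg_eq_add] at this
    linarith
  have hcz : c + z ≠ 0 := norm_pos_iff.1 ((norm_nonneg z).trans_lt hzcz)
  have hc : c ≠ 0 := norm_pos_iff.1 (by linarith [norm_pos_iff.2 hz])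
  rw [mul_deriv_add_sq_div_div hc hz hcz]
  refine re_pos_of_norm_sub_one_lt_one ?_
  rw [add_sub_cancel_left, norm_div]
  exact (div_lt_one (by linarith [norm_nonneg z])).2 hzcz

theorem deriv_add_sq_div_neg_half (hc : c ≠ 0) :
    deriv (fun w => w + w ^ 2 / c) (-c / 2) = 0 := by
  rw [(hasDerivAt_add_sq_div c _).deriv]
  field_simp
  ring

theorem add_sq_div_neg_half_add (hc : c ≠ 0) (t : ℂ) :
    (-c / 2 + t) + (-c / 2 + t) ^ 2 / c = (-c / 2 - t) + (-c / 2 - t) ^ 2 / c := by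
  field_simp
  ring

end AddSqDiv

theorem not_injOn_of_apply_add_eq_apply_sub {g : ℂ → ℂ} {s : Set ℂ} {a : ℂ} (hs : IsOpen s)
    (ha : a ∈ s) (hg : ∀ t, g (a + t) = g (a - t)) : ¬ Set.InjOn g s := by
  intro hinj
  obtain ⟨ε, hε, hball⟩ := Metric.isOpen_iff.1 hs a ha
  have hmem : ∀ t : ℂ, ‖t‖ < ε → a + t ∈ s := fun t ht =>
    hball (by simpa [mem_ball, dist_eq_norm] using ht)
  have ht : ‖((ε / 2 : ℝ) : ℂ)‖ < ε := by
    rw [Complex.norm_real, Real.norm_eq_abs, abs_of_pos (half_pos hε)]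
    linarith
  have heq := hinj (hmem _ ht)
    (by simpa [sub_eq_add_neg] using hmem _ ((norm_neg _).trans_lt ht)) (hg _)
  have hzero : ((ε / 2 : ℝ) : ℂ) = 0 := by linear_combination heq / 2
  norm_num at hzero
  linarith

theorem stmt_19 (b : ℝ) (hb0 : 0 < b) (hb2 : b ≤ 2)
    (fb gb : ℂ → ℂ)
    (hfb : fb = fun z => z / (1 + (b:ℂ) * z + z ^ 2))
    (hgb : gb = fun z => z + z ^ 2 / (b:ℂ)) :
    (AnalyticOn ℂ fb (ball 0 1) ∧ fb 0 = 0 ∧ deriv fb 0 = 1 ∧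
      ∀ z ∈ ball (0:ℂ) 1, z ≠ 0 → ‖(z / fb z) ^ 2 * deriv fb z - 1‖ < 1) ∧
    (∀ z : ℂ, 0 < ‖z‖ → ‖z‖ < b / 2 → 0 < (z * deriv gb z / gb z).re) ∧
    deriv gb (-(b:ℂ) / 2) = 0 ∧
    (∀ r : ℝ, b / 2 < r → ¬ Set.InjOn gb (ball 0 r)) := by
  subst hfb hgb
  have hb : (b : ℂ) ≠ 0 := by exact_mod_cast hb0.ne'
  have hnorm_b : ‖(b : ℂ)‖ = b := by rw [Complex.norm_real, Real.norm_of_nonneg hb0.le]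
  have hp (z : ℂ) : HasDerivAt (fun w : ℂ => 1 + (b : ℂ) * w + w ^ 2) (b + 2 * z) z := by
    simpa using (((hasDerivAt_id' (x := z)).const_mul (b : ℂ)).const_add 1).fun_add
      (hasDerivAt_pow 2 z)
  have hpz (z : ℂ) (hz : z ∈ ball (0 : ℂ) 1) : 1 + (b : ℂ) * z + z ^ 2 ≠ 0 :=
    one_add_mul_add_sq_ne_zero (abs_le.2 ⟨by linarith, hb2⟩) (mem_ball_zero_iff.1 hz)
  refine ⟨⟨?_, by simp, ?_, fun z hz hz0 => ?_⟩, fun z hz0 hzb => ?_,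
    deriv_add_sq_div_neg_half hb, fun r hr => ?_⟩
  · exact DifferentiableOn.analyticOn (fun z hz =>
      (hasDerivAt_id_div (hp z) (hpz z hz)).differentiableAt.differentiableWithinAt) isOpen_ball
  · simpa using (hasDerivAt_id_div (hp 0) (by simp)).deriv
  · rw [div_div_sq_mul_deriv_id_div (hp z) (hpz z hz) hz0,
      show 1 + (b : ℂ) * z + z ^ 2 - z * (b + 2 * z) - 1 = -z ^ 2 by ring, norm_neg, norm_pow]
    exact pow_lt_one₀ (norm_nonneg z) (mem_ball_zero_iff.1 hz) two_ne_zero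
  · exact re_mul_deriv_add_sq_div_div_pos (norm_pos_iff.1 hz0) (by rw [hnorm_b]; linarith)
  · refine not_injOn_of_apply_add_eq_apply_sub isOpen_ball ?_ (add_sq_div_neg_half_add hb)
    rw [mem_ball_zero_iff, norm_div, norm_neg, hnorm_b, Complex.norm_two]
    exact hr
end
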